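/- arXiv:2506.11732 — 9 statements merged into one kernel-verified Lean document; each statement's English description precedes it below -/
import Mathlib

section
/- Let A : ℝⁿ → ℝᵐ be a linear map, let α > 0, and let R : ℝⁿ → ℝ be a continuous, m-strongly convex function for some m > 0. For y ∈ ℝᵐ let u(y, α) denote the unique minimizer of F_{y,α}(u) = ‖Au − y‖² + α·R(u). Then the map y ↦ u(y, α) is continuous: for every sequence y_k → y in ℝᵐ one has u(y_k, α) → u(y, α) in ℝⁿ. -/
/-!
Since `u ↦ ‖A u - y‖²` is convex, `F_y = ‖A · - y‖² + α R` is `α m`-strongly convex, so it grows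
quadratically away from its minimizer: `F_y (sol y) + (α m / 4) ‖u - sol y‖² ≤ F_y u`.
Writing this for `y` and `y'`, each evaluated at the other's minimizer, and adding, the regularizer
cancels and only the cross term `2 ⟪A (sol y - sol y'), y - y'⟫ ≤ 2 ‖A‖ ‖sol y - sol y'‖ ‖y - y'‖`
remains. Hence `y ↦ sol y` is Lipschitz with constant `4 ‖A‖ / (α m)`.
-/

open Filter Topology

section StrongConvexity

variable {E : Type*} [NormedAddCommGroup E] [NormedSpace ℝ E] {s : Set E} {f g : E → ℝ}
  {c : ℝ}

lemma StrongConvexOn.const_mul {a : ℝ} (ha : 0 ≤ a) (hf : StrongConvexOn s c f) :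
    StrongConvexOn s (a * c) fun x ↦ a * f x := by
  refine ⟨hf.1, fun x hx y hy p q hp hq hpq ↦ ?_⟩
  calc a * f (p • x + q • y)
      ≤ a * (p • f x + q • f y - p * q * (c / 2 * ‖x - y‖ ^ 2)) :=
        mul_le_mul_of_nonneg_left (hf.2 hx hy hp hq hpq) ha
    _ = p • (a * f x) + q • (a * f y) - p * q * (a * c / 2 * ‖x - y‖ ^ 2) := by
        simp only [smul_eq_mul]; ring

lemma ConvexOn.add_strongConvexOn (hf : ConvexOn ℝ s f) (hg : StrongConvexOn s c g) :
    StrongConvexOn s c (f + g) := by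
  have h := hf.uniformConvexOn_zero.add hg
  rwa [zero_add] at h

/-- Strong convexity is only used at the midpoint, which gives `c / 4` instead of the optimal
`c / 2`. -/
lemma StrongConvexOn.add_sq_le_of_isMinOn (hf : StrongConvexOn s c f) {x y : E}
    (hmin : IsMinOn f s x) (hx : x ∈ s) (hy : y ∈ s) :
    f x + c / 4 * ‖y - x‖ ^ 2 ≤ f y := by
  have hhalf : (0 : ℝ) ≤ 1 / 2 := by norm_num
  have hsum : (1 / 2 : ℝ) + 1 / 2 = 1 := by norm_num
  have hmid := hf.2 hy hx hhalf hhalf hsum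
  have hle : f x ≤ f ((1 / 2 : ℝ) • y + (1 / 2 : ℝ) • x) := hmin (hf.1 hy hx hhalf hhalf hsum)
  simp only [smul_eq_mul] at hmid
  linarith

end StrongConvexity

lemma convexOn_norm_map_sub_sq {E F : Type*} [NormedAddCommGroup E] [NormedSpace ℝ E]
    [NormedAddCommGroup F] [NormedSpace ℝ F] (A : E →ₗ[ℝ] F) (y : F) :
    ConvexOn ℝ Set.univ fun u ↦ ‖A u - y‖ ^ 2 := by
  have h := ((convexOn_univ_dist y).pow (fun _ _ ↦ dist_nonneg) 2).comp_linearMap A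
  rw [Set.preimage_univ] at h
  simpa only [Function.comp_def, Pi.pow_apply, dist_eq_norm] using h

section Stability

variable {E F : Type*} [NormedAddCommGroup E] [InnerProductSpace ℝ E]
  [NormedAddCommGroup F] [InnerProductSpace ℝ F] {A : E →L[ℝ] F} {g : E → ℝ} {c : ℝ}

lemma mul_norm_sub_le_of_isMinOn_norm_map_sub_sq_add (hg : StrongConvexOn Set.univ c g)
    {y y' : F} {u u' : E} (hu : IsMinOn (fun v ↦ ‖A v - y‖ ^ 2 + g v) Set.univ u)
    (hu' : IsMinOn (fun v ↦ ‖A v - y'‖ ^ 2 + g v) Set.univ u') :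
    c * ‖u - u'‖ ≤ 4 * ‖A‖ * ‖y - y'‖ := by
  have hF (z : F) : StrongConvexOn Set.univ c fun v ↦ ‖A v - z‖ ^ 2 + g v :=
    (convexOn_norm_map_sub_sq A.toLinearMap z).add_strongConvexOn hg
  have hgrow := (hF y).add_sq_le_of_isMinOn hu trivial (Set.mem_univ u')
  have hgrow' := (hF y').add_sq_le_of_isMinOn hu' trivial (Set.mem_univ u)
  have hcross : ‖A u' - y‖ ^ 2 - ‖A u' - y'‖ ^ 2 - ‖A u - y‖ ^ 2 + ‖A u - y'‖ ^ 2
      = 2 * inner ℝ (A (u - u')) (y - y') := by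
    simp only [map_sub, norm_sub_sq_real, inner_sub_left, inner_sub_right]
    ring
  have hinner : inner ℝ (A (u - u')) (y - y') ≤ ‖A‖ * ‖u - u'‖ * ‖y - y'‖ :=
    (real_inner_le_norm _ _).trans (by gcongr; exact A.le_opNorm _)
  have hsq : c / 2 * ‖u - u'‖ ^ 2 ≤ 4 * ‖A‖ * ‖y - y'‖ * ‖u - u'‖ / 2 := by
    rw [norm_sub_rev u'] at hgrow
    nlinarith
  rcases (norm_nonneg (u - u')).eq_or_lt with hd | hd
  · rw [← hd, mul_zero]
    positivity
  · nlinarith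

lemma lipschitzWith_of_isMinOn_norm_map_sub_sq_add (hg : StrongConvexOn Set.univ c g)
    (hc : 0 < c) {sol : F → E}
    (hsol : ∀ y, IsMinOn (fun v ↦ ‖A v - y‖ ^ 2 + g v) Set.univ (sol y)) :
    LipschitzWith (Real.toNNReal (4 * ‖A‖ / c)) sol :=
  LipschitzWith.of_dist_le' fun y y' ↦ by
    rw [dist_eq_norm, dist_eq_norm, div_mul_eq_mul_div, le_div_iff₀ hc, mul_comm]
    exact mul_norm_sub_le_of_isMinOn_norm_map_sub_sq_add hg (hsol y) (hsol y')

end Stability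

theorem stmt1_general {n m' : ℕ}
    (A : EuclideanSpace ℝ (Fin n) →ₗ[ℝ] EuclideanSpace ℝ (Fin m'))
    (α : ℝ) (hα : 0 < α)
    (R : EuclideanSpace ℝ (Fin n) → ℝ) (m : ℝ) (hm : 0 < m)
    (hRsc : ConvexOn ℝ Set.univ (fun u => R u - (m / 2) * ‖u‖ ^ 2))
    (sol : EuclideanSpace ℝ (Fin m') → EuclideanSpace ℝ (Fin n))
    (hsol : ∀ y : EuclideanSpace ℝ (Fin m'),
      ∀ u : EuclideanSpace ℝ (Fin n),
        ‖A (sol y) - y‖ ^ 2 + α * R (sol y) ≤ ‖A u - y‖ ^ 2 + α * R u) :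
    ∀ (yk : ℕ → EuclideanSpace ℝ (Fin m')) (y : EuclideanSpace ℝ (Fin m')),
      Tendsto yk atTop (𝓝 y) →
      Tendsto (fun k => sol (yk k)) atTop (𝓝 (sol y)) := by
  intro yk y hy
  have hreg : StrongConvexOn Set.univ (α * m) fun u ↦ α * R u :=
    (strongConvexOn_iff_convex.mpr hRsc).const_mul hα.le
  have hlip := lipschitzWith_of_isMinOn_norm_map_sub_sq_add
    (A := LinearMap.toContinuousLinearMap A) hreg (mul_pos hα hm)
    fun y ↦ isMinOn_univ_iff.mpr (hsol y)
  exact hlip.continuous.continuousAt.tendsto.comp hy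

/-- **Stability of variational regularization.** With `A` linear, `α > 0`, `R`
continuous and `m`-strongly convex, let `sol y` denote the (unique) minimizer of
`F_{y,α}(u) = ‖Au − y‖² + α R(u)`. Then `y ↦ sol y` is sequentially continuous:
for every sequence `y_k → y` we have `sol y_k → sol y`. -/
theorem stmt1 {n m' : ℕ}
    (A : EuclideanSpace ℝ (Fin n) →ₗ[ℝ] EuclideanSpace ℝ (Fin m'))
    (α : ℝ) (hα : 0 < α)
    (R : EuclideanSpace ℝ (Fin n) → ℝ) (m : ℝ) (hm : 0 < m)
    (hRcont : Continuous R)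
    (hRsc : ConvexOn ℝ Set.univ (fun u => R u - (m / 2) * ‖u‖ ^ 2))
    (sol : EuclideanSpace ℝ (Fin m') → EuclideanSpace ℝ (Fin n))
    (hsol : ∀ y : EuclideanSpace ℝ (Fin m'),
      ∀ u : EuclideanSpace ℝ (Fin n),
        ‖A (sol y) - y‖ ^ 2 + α * R (sol y) ≤ ‖A u - y‖ ^ 2 + α * R u) :
    ∀ (yk : ℕ → EuclideanSpace ℝ (Fin m')) (y : EuclideanSpace ℝ (Fin m')),
      Tendsto yk atTop (𝓝 y) →
      Tendsto (fun k => sol (yk k)) atTop (𝓝 (sol y)) :=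
  stmt1_general A α hα R m hm hRsc sol hsol
end

section
/- Let A : ℝⁿ → ℝᵐ be a linear map and R : ℝⁿ → ℝ a continuous, m-strongly convex function for some m > 0. Let u* ∈ ℝⁿ, set y⁰ = A u*, and let u† be the unique minimizer of R over the affine set {u ∈ ℝⁿ : Au = y⁰} (the R-minimizing solution). For y ∈ ℝᵐ and α > 0 let u(y, α) denote the unique minimizer of F_{y,α}(u) = ‖Au − y‖² + α·R(u). Suppose δ_k > 0 with δ_k → 0, y_k ∈ ℝᵐ satisfies ‖y_k − y⁰‖ ≤ δ_k for each k, and the parameter choice α_k > 0 satisfies α_k → 0 and δ_k²/α_k → 0. Then u(y_k, α_k) → u† as k → ∞. -/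
/-!
Comparing with `u†` gives the fundamental estimate
`‖A u_k - y_k‖² + α_k R(u_k) ≤ δ_k² + α_k R(u†)`, so `R(u_k) ≤ R(u†) + δ_k²/α_k`
and the residual `A u_k - y⁰` tends to zero. Strong convexity makes `R` coercive, so the `u_k`
eventually lie in a compact sublevel set of `R`. Any cluster point `a` then satisfies `A a = y⁰`
and `R a ≤ R u†`, and `a = u†` because a strictly convex function has at most one minimizer on
the affine set `{Au = y⁰}`.
-/

open Filter Set Topology

theorem ConvexOn.exists_sub_mul_norm_le {E : Type*} [NormedAddCommGroup E] [NormedSpace ℝ E]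
    {g : E → ℝ} (hg : ConvexOn ℝ univ g) (hc : ContinuousAt g 0) :
    ∃ a b : ℝ, ∀ v, a - b * ‖v‖ ≤ g v := by
  obtain ⟨r, hr, hball⟩ := Metric.continuousAt_iff.1 hc 1 one_pos
  have hnear : ∀ w : E, ‖w‖ < r → g 0 - 1 < g w := fun w hw => by
    have := hball (by simpa using hw)
    rw [Real.dist_eq] at this
    linarith [neg_abs_le (g w - g 0)]
  refine ⟨g 0 - 1, 2 / r, fun v => ?_⟩
  rcases lt_or_ge ‖v‖ r with hv | hv
  · have := hnear v hv
    have : 0 ≤ 2 / r * ‖v‖ := by positivity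
    linarith
  -- convexity on the segment from `0` to `v`, at the point `t • v` of norm `r / 2`
  have hvpos : 0 < ‖v‖ := hr.trans_le hv
  set t := r / (2 * ‖v‖) with ht
  have ht0 : 0 < t := by positivity
  have ht1 : t ≤ 1 := by rw [ht, div_le_one (by positivity)]; linarith
  have hconv : g (t • v) ≤ (1 - t) * g 0 + t * g v := by
    simpa using hg.2 (mem_univ 0) (mem_univ v) (sub_nonneg.2 ht1) ht0.le (by ring)
  have hnorm : ‖t • v‖ < r := by
    rw [norm_smul, Real.norm_of_nonneg ht0.le, ht, div_mul_eq_mul_div,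
      mul_div_mul_right _ _ hvpos.ne']
    linarith
  have hkey : t * (g 0 - g v) < 1 := by linarith [hnear _ hnorm]
  have hinv : 1 / t = 2 / r * ‖v‖ := by rw [ht, one_div_div]; ring
  have := (lt_div_iff₀' ht0).2 hkey
  linarith

theorem StrongConvexOn.tendsto_cocompact_atTop {E : Type*} [NormedAddCommGroup E]
    [InnerProductSpace ℝ E] [ProperSpace E] {f : E → ℝ} {m : ℝ}
    (hf : StrongConvexOn univ m f) (hm : 0 < m) (hc : ContinuousAt f 0) :
    Tendsto f (cocompact E) atTop := by
  obtain ⟨a, b, hab⟩ := (strongConvexOn_iff_convex.1 hf).exists_sub_mul_norm_le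
    (hc.sub (by fun_prop))
  have hquad : Tendsto (fun t : ℝ => t * (m / 2 * t - b) + a) atTop atTop :=
    tendsto_atTop_add_const_right _ a <| tendsto_id.atTop_mul_atTop₀ <|
      tendsto_atTop_add_const_right _ (-b) (tendsto_id.const_mul_atTop (by positivity))
  refine tendsto_atTop_mono (fun v => ?_) (hquad.comp tendsto_norm_cocompact_atTop)
  have := hab v
  simp only [Function.comp_apply]
  linarith

theorem Continuous.isCompact_setOf_le_of_tendsto_cocompact {X α : Type*} [TopologicalSpace X]
    [LinearOrder α] [NoMaxOrder α] [TopologicalSpace α] [ClosedIicTopology α] {f : X → α}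
    (hf : Continuous f) (h : Tendsto f (cocompact X) atTop) (c : α) :
    IsCompact {x | f x ≤ c} := by
  obtain ⟨K, hK, hKc⟩ := mem_cocompact.1 (h.eventually_gt_atTop c)
  refine hK.of_isClosed_subset (isClosed_Iic.preimage hf) fun x hx => ?_
  by_contra hxK
  exact (hKc hxK).not_ge hx

theorem MapClusterPt.eq_of_tendsto {X α : Type*} [TopologicalSpace X] [T2Space X]
    {F : Filter α} {u : α → X} {x y : X} (hx : MapClusterPt x F u) (hu : Tendsto u F (𝓝 y)) :
    x = y :=
  eq_of_nhds_neBot (hx.clusterPt.mono hu)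

theorem MapClusterPt.le_of_tendsto_of_eventually_le {α β : Type*} [LinearOrder β]
    [TopologicalSpace β] [OrderTopology β] [DenselyOrdered β] {F : Filter α} {u v : α → β}
    {x y : β} (hx : MapClusterPt x F u) (hv : Tendsto v F (𝓝 y))
    (huv : ∀ᶠ a in F, u a ≤ v a) : x ≤ y :=
  le_of_forall_gt_imp_ge_of_dense fun _ hz => isClosed_Iic.mem_of_mapClusterPt hx <|
    (huv.and (hv.eventually (eventually_lt_nhds hz))).mono fun _ h => h.1.trans h.2.le

section Tikhonov

variable {E F : Type*} [NormedAddCommGroup F] (A : E → F) (R : E → ℝ)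

def tikhonov (y : F) (α : ℝ) (u : E) : ℝ := ‖A u - y‖ ^ 2 + α * R u

variable {A R} {u udag : E} {y y0 : F} {α δ : ℝ}

theorem tikhonov_le_of_norm_sub_le (hfeas : A udag = y0) (hy : ‖y - y0‖ ≤ δ) :
    tikhonov A R y α udag ≤ δ ^ 2 + α * R udag := by
  have : ‖A udag - y‖ ≤ δ := by rwa [hfeas, norm_sub_rev]
  unfold tikhonov
  gcongr

theorem le_add_sq_div_of_tikhonov_le (hα : 0 < α)
    (h : tikhonov A R y α u ≤ δ ^ 2 + α * R udag) : R u ≤ R udag + δ ^ 2 / α := by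
  rw [← sub_le_iff_le_add', le_div_iff₀ hα]
  unfold tikhonov at h
  nlinarith [sq_nonneg ‖A u - y‖]

theorem norm_sub_le_of_tikhonov_le {c : ℝ} (hα : 0 ≤ α) (hc : c ≤ R u)
    (hy : ‖y - y0‖ ≤ δ) (h : tikhonov A R y α u ≤ δ ^ 2 + α * R udag) :
    ‖A u - y0‖ ≤ √(δ ^ 2 + α * (R udag - c)) + δ := by
  have hres : ‖A u - y‖ ≤ √(δ ^ 2 + α * (R udag - c)) := by
    unfold tikhonov at h
    exact Real.le_sqrt_of_sq_le (by nlinarith [mul_le_mul_of_nonneg_left hc hα])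
  calc ‖A u - y0‖ ≤ ‖A u - y‖ + ‖y - y0‖ := norm_sub_le_norm_sub_add_norm_sub _ _ _
    _ ≤ _ := add_le_add hres hy

end Tikhonov

theorem stmt2_general {n m' : ℕ}
    (A : EuclideanSpace ℝ (Fin n) →ₗ[ℝ] EuclideanSpace ℝ (Fin m'))
    (R : EuclideanSpace ℝ (Fin n) → ℝ) (m : ℝ) (hm : 0 < m)
    (hRcont : Continuous R)
    (hRsc : ConvexOn ℝ Set.univ (fun u => R u - (m / 2) * ‖u‖ ^ 2))
    (y0 : EuclideanSpace ℝ (Fin m'))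
    (udag : EuclideanSpace ℝ (Fin n))
    (hudag_feas : A udag = y0)
    (hudag_min : ∀ u : EuclideanSpace ℝ (Fin n), A u = y0 → R udag ≤ R u)
    (sol : EuclideanSpace ℝ (Fin m') → ℝ → EuclideanSpace ℝ (Fin n))
    (hsol : ∀ (y : EuclideanSpace ℝ (Fin m')) (α : ℝ), 0 < α →
      ∀ u : EuclideanSpace ℝ (Fin n),
        ‖A (sol y α) - y‖ ^ 2 + α * R (sol y α) ≤ ‖A u - y‖ ^ 2 + α * R u)
    (δ : ℕ → ℝ) (hδ0 : Tendsto δ atTop (𝓝 0))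
    (yk : ℕ → EuclideanSpace ℝ (Fin m')) (hyk : ∀ k, ‖yk k - y0‖ ≤ δ k)
    (α : ℕ → ℝ) (hαpos : ∀ k, 0 < α k) (hα0 : Tendsto α atTop (𝓝 0))
    (hδα : Tendsto (fun k => δ k ^ 2 / α k) atTop (𝓝 0)) :
    Tendsto (fun k => sol (yk k) (α k)) atTop (𝓝 udag) := by
  set u := fun k => sol (yk k) (α k)
  have hR : StrongConvexOn univ m R := strongConvexOn_iff_convex.2 hRsc
  have hcoer := hR.tendsto_cocompact_atTop hm hRcont.continuousAt
  obtain ⟨umin, humin⟩ := hRcont.exists_forall_le hcoer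
  have hfund k : tikhonov A R (yk k) (α k) (u k) ≤ δ k ^ 2 + α k * R udag :=
    (hsol _ _ (hαpos k) udag).trans (tikhonov_le_of_norm_sub_le hudag_feas (hyk k))
  have hRu k : R (u k) ≤ R udag + δ k ^ 2 / α k :=
    le_add_sq_div_of_tikhonov_le (hαpos k) (hfund k)
  have hAu : Tendsto (fun k => A (u k)) atTop (𝓝 y0) := by
    rw [tendsto_iff_norm_sub_tendsto_zero]
    refine squeeze_zero (fun _ => norm_nonneg _)
      (fun k => norm_sub_le_of_tikhonov_le (hαpos k).le (humin _) (hyk k) (hfund k)) ?_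
    simpa using ((hδ0.pow 2).add (hα0.mul_const _)).sqrt.add hδ0
  refine (hRcont.isCompact_setOf_le_of_tendsto_cocompact hcoer (R udag + 1)
    ).tendsto_nhds_of_unique_mapClusterPt ?_ fun a _ ha => ?_
  · filter_upwards [hδα.eventually (eventually_le_nhds one_pos)] with k hk
    exact (hRu k).trans (add_le_add_right hk _)
  have hAa : A a = y0 :=
    (ha.continuousAt_comp A.continuous_of_finiteDimensional.continuousAt).eq_of_tendsto hAu
  have hRa : R a ≤ R udag :=
    (ha.continuousAt_comp hRcont.continuousAt).le_of_tendsto_of_eventually_le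
      (by simpa using hδα.const_add (R udag)) (.of_forall hRu)
  have hfeas : Convex ℝ {v | A v = y0} := (convex_singleton y0).linear_preimage A
  exact ((hR.strictConvexOn hm).subset (subset_univ _) hfeas).eq_of_isMinOn
    (fun v hv => hRa.trans (hudag_min v hv)) hudag_min hAa hudag_feas

/-- **Convergent regularization.** With `A` linear, `R` continuous and `m`-strongly
convex, `y⁰ = A u*`, `u†` the `R`-minimizing solution of `Au = y⁰`, and `sol y α`
the minimizer of `‖Au − y‖² + α R(u)`. If `δ_k → 0`, `‖y_k − y⁰‖ ≤ δ_k`, `α_k → 0`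
and `δ_k²/α_k → 0`, then `sol y_k α_k → u†`. -/
theorem stmt2 {n m' : ℕ}
    (A : EuclideanSpace ℝ (Fin n) →ₗ[ℝ] EuclideanSpace ℝ (Fin m'))
    (R : EuclideanSpace ℝ (Fin n) → ℝ) (m : ℝ) (hm : 0 < m)
    (hRcont : Continuous R)
    (hRsc : ConvexOn ℝ Set.univ (fun u => R u - (m / 2) * ‖u‖ ^ 2))
    (ustar : EuclideanSpace ℝ (Fin n))
    (y0 : EuclideanSpace ℝ (Fin m')) (hy0 : y0 = A ustar)
    (udag : EuclideanSpace ℝ (Fin n))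
    (hudag_feas : A udag = y0)
    (hudag_min : ∀ u : EuclideanSpace ℝ (Fin n), A u = y0 → R udag ≤ R u)
    (sol : EuclideanSpace ℝ (Fin m') → ℝ → EuclideanSpace ℝ (Fin n))
    (hsol : ∀ (y : EuclideanSpace ℝ (Fin m')) (α : ℝ), 0 < α →
      ∀ u : EuclideanSpace ℝ (Fin n),
        ‖A (sol y α) - y‖ ^ 2 + α * R (sol y α) ≤ ‖A u - y‖ ^ 2 + α * R u)
    (δ : ℕ → ℝ) (hδpos : ∀ k, 0 < δ k) (hδ0 : Tendsto δ atTop (𝓝 0))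
    (yk : ℕ → EuclideanSpace ℝ (Fin m')) (hyk : ∀ k, ‖yk k - y0‖ ≤ δ k)
    (α : ℕ → ℝ) (hαpos : ∀ k, 0 < α k) (hα0 : Tendsto α atTop (𝓝 0))
    (hδα : Tendsto (fun k => δ k ^ 2 / α k) atTop (𝓝 0)) :
    Tendsto (fun k => sol (yk k) (α k)) atTop (𝓝 udag) :=
  stmt2_general A R m hm hRcont hRsc y0 udag hudag_feas hudag_min sol hsol δ hδ0 yk hyk α hαpos hα0
    hδα
end

section
/- Let A : ℝⁿ → ℝᵐ be a linear map and let μ, L ≥ 0 satisfy μ‖u‖² ≤ ‖Au‖² ≤ L‖u‖² for all u ∈ ℝⁿ (μ and L are the smallest and largest eigenvalues of AᵀA). Let R : ℝⁿ → ℝⁿ be a map such that R − Id is ε-Lipschitz, let y ∈ ℝᵐ, and for a step size η define Γ(u) = u + η·Aᵀ(y − Au) − η·R(u). If 0 < η < 1/(L+1), then for all u, ũ ∈ ℝⁿ: ‖Γ(u) − Γ(ũ)‖ ≤ (1 − η(1+μ) + ηε)·‖u − ũ‖. -/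
open RealInnerProductSpace

set_option maxHeartbeats 1000000 in
/-- **Contraction estimate for deep equilibrium gradient descent.**
If `μ‖u‖² ≤ ‖Au‖² ≤ L‖u‖²`, `R − Id` is `ε`-Lipschitz, `0 < η < 1/(L+1)`, and
`Γ(u) = u + η Aᵀ(y − Au) − η R(u)`, then
`‖Γ(u) − Γ(ũ)‖ ≤ (1 − η(1+μ) + ηε) ‖u − ũ‖` for all `u, ũ`. -/
theorem stmt3 {n m' : ℕ}
    (A : EuclideanSpace ℝ (Fin n) →L[ℝ] EuclideanSpace ℝ (Fin m'))
    (μ L : ℝ) (hμ0 : 0 ≤ μ) (hL0 : 0 ≤ L)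
    (hμ : ∀ u : EuclideanSpace ℝ (Fin n), μ * ‖u‖ ^ 2 ≤ ‖A u‖ ^ 2)
    (hL : ∀ u : EuclideanSpace ℝ (Fin n), ‖A u‖ ^ 2 ≤ L * ‖u‖ ^ 2)
    (R : EuclideanSpace ℝ (Fin n) → EuclideanSpace ℝ (Fin n))
    (ε : ℝ) (hε0 : 0 ≤ ε)
    (hR : ∀ u v : EuclideanSpace ℝ (Fin n),
      ‖(R u - u) - (R v - v)‖ ≤ ε * ‖u - v‖)
    (y : EuclideanSpace ℝ (Fin m'))
    (η : ℝ) (hη0 : 0 < η) (hη1 : η < 1 / (L + 1)) :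
    ∀ u utilde : EuclideanSpace ℝ (Fin n),
      ‖(u + η • (ContinuousLinearMap.adjoint A) (y - A u) - η • R u) -
        (utilde + η • (ContinuousLinearMap.adjoint A) (y - A utilde) - η • R utilde)‖
      ≤ (1 - η * (1 + μ) + η * ε) * ‖u - utilde‖ := by
  intro u utilde
  have hη1' : η * (L + 1) < 1 := by
    rw [lt_div_iff₀ (by linarith : (0:ℝ) < L + 1)] at hη1
    linarith
  set f : EuclideanSpace ℝ (Fin n) → EuclideanSpace ℝ (Fin n) :=
    fun x => (1 - η) • x - η • (ContinuousLinearMap.adjoint A (A x)) with hf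
  -- the bilinear form g x z = ⟪f x, z⟫
  set g : EuclideanSpace ℝ (Fin n) → EuclideanSpace ℝ (Fin n) → ℝ :=
    fun x z => (1 - η) * ⟪x, z⟫ - η * ⟪A x, A z⟫ with hg
  have hfg : ∀ x z, ⟪f x, z⟫ = g x z := by
    intro x z
    simp only [hf, hg, inner_sub_left, real_inner_smul_left,
      ContinuousLinearMap.adjoint_inner_left]
  have hgxx : ∀ x, g x x = (1 - η) * ‖x‖ ^ 2 - η * ‖A x‖ ^ 2 := by
    intro x
    simp only [hg, real_inner_self_eq_norm_sq]
  have hgpos : ∀ x, 0 ≤ g x x := by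
    intro x
    rw [hgxx]
    nlinarith [hL x, sq_nonneg ‖x‖, hη0.le]
  -- key contraction estimate
  have hkey : ∀ w, ‖f w‖ ≤ (1 - η * (1 + μ)) * ‖w‖ := by
    intro w
    by_cases hw : w = 0
    · simp [hw, hf]
    · have ht : 0 < ‖w‖ := norm_pos_iff.mpr hw
      have hμL : μ ≤ L := by nlinarith [hμ w, hL w, pow_pos ht 2]
      have hc : 0 ≤ 1 - η * (1 + μ) := by nlinarith
      -- Cauchy–Schwarz for g, with v = f w
      set v := f w with hv
      have hquad : ∀ θ : ℝ, 0 ≤ (g v v) * (θ * θ) + (2 * g w v) * θ + g w w := by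
        intro θ
        have h0 := hgpos (w + θ • v)
        have hexp : g (w + θ • v) (w + θ • v)
            = (g v v) * (θ * θ) + (2 * g w v) * θ + g w w := by
          simp only [hg, map_add, map_smul, inner_add_add_self, real_inner_smul_left,
            real_inner_smul_right, real_inner_comm w v, real_inner_comm (A w) (A v)]
          ring
        linarith [hexp ▸ h0]
      have hdisc := discrim_le_zero hquad
      rw [discrim] at hdisc
      have hcs : (g w v) ^ 2 ≤ g v v * g w w := by nlinarith [hdisc]
      have hwv : g w v = ‖f w‖ ^ 2 := by
        rw [← hfg, real_inner_comm, real_inner_self_eq_norm_sq]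
      have hbww : g w w ≤ (1 - η * (1 + μ)) * ‖w‖ ^ 2 := by
        rw [hgxx]; nlinarith [hμ w]
      have hbvv : g v v ≤ (1 - η * (1 + μ)) * ‖v‖ ^ 2 := by
        rw [hgxx]; nlinarith [hμ v]
      set s := ‖f w‖ with hs
      have hs0 : 0 ≤ s := norm_nonneg _
      have h4 : s ^ 2 * s ^ 2 ≤ ((1 - η * (1 + μ)) * ‖w‖ ^ 2) * ((1 - η * (1 + μ)) * s ^ 2) := by
        calc s ^ 2 * s ^ 2 = (g w v) ^ 2 := by rw [hwv]; ring
          _ ≤ g v v * g w w := hcs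
          _ ≤ ((1 - η * (1 + μ)) * s ^ 2) * ((1 - η * (1 + μ)) * ‖w‖ ^ 2) := by
              apply mul_le_mul hbvv hbww (hgpos w)
              positivity
          _ = ((1 - η * (1 + μ)) * ‖w‖ ^ 2) * ((1 - η * (1 + μ)) * s ^ 2) := by ring
      rcases eq_or_lt_of_le hs0 with h | h
      · rw [← h]; positivity
      · have h4' : s ^ 2 * s ^ 2 ≤ ((1 - η * (1 + μ)) * ‖w‖) ^ 2 * s ^ 2 := by
          calc s ^ 2 * s ^ 2 ≤ ((1 - η * (1 + μ)) * ‖w‖ ^ 2) * ((1 - η * (1 + μ)) * s ^ 2) := h4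
            _ = ((1 - η * (1 + μ)) * ‖w‖) ^ 2 * s ^ 2 := by ring
        have hs2 : s ^ 2 ≤ ((1 - η * (1 + μ)) * ‖w‖) ^ 2 :=
          le_of_mul_le_mul_right h4' (by positivity)
        calc s = Real.sqrt (s ^ 2) := (Real.sqrt_sq hs0).symm
          _ ≤ Real.sqrt (((1 - η * (1 + μ)) * ‖w‖) ^ 2) := Real.sqrt_le_sqrt hs2
          _ = (1 - η * (1 + μ)) * ‖w‖ := Real.sqrt_sq (mul_nonneg hc ht.le)
  -- rewrite the difference
  have hdiff : (u + η • (ContinuousLinearMap.adjoint A) (y - A u) - η • R u) -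
      (utilde + η • (ContinuousLinearMap.adjoint A) (y - A utilde) - η • R utilde)
      = f (u - utilde) - η • ((R u - u) - (R utilde - utilde)) := by
    simp only [hf, map_sub, smul_sub, sub_smul, one_smul]
    module
  rw [hdiff]
  calc ‖f (u - utilde) - η • ((R u - u) - (R utilde - utilde))‖
      ≤ ‖f (u - utilde)‖ + ‖η • ((R u - u) - (R utilde - utilde))‖ := norm_sub_le _ _
    _ ≤ (1 - η * (1 + μ)) * ‖u - utilde‖ + η * (ε * ‖u - utilde‖) := by
        apply add_le_add (hkey _)
        rw [norm_smul, Real.norm_eq_abs, abs_of_pos hη0]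
        exact mul_le_mul_of_nonneg_left (hR u utilde) hη0.le
    _ = (1 - η * (1 + μ) + η * ε) * ‖u - utilde‖ := by ring
end

section
/- Let A : ℝⁿ → ℝᵐ be a linear map with μ‖u‖² ≤ ‖Au‖² ≤ L‖u‖² for all u ∈ ℝⁿ, let R : ℝⁿ → ℝⁿ be a map such that R − Id is ε-Lipschitz with ε < 1 + μ, let y ∈ ℝᵐ, let 0 < η < 1/(L+1), and define Γ(u) = u + η·Aᵀ(y − Au) − η·R(u). Then Γ is a contraction with constant γ = 1 − η(1+μ) + ηε < 1; consequently Γ has a unique fixed point u_∞ ∈ ℝⁿ, and for every initial point u⁰ the iterates u^{k+1} = Γ(u^k) converge to u_∞. -/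
open Filter Topology RealInnerProductSpace

-- Cauchy–Schwarz for a positive symmetric map given via a function
lemma cs_pos {E : Type*} [NormedAddCommGroup E] [InnerProductSpace ℝ E]
    (T : E → E) (β : ℝ)
    (hsym : ∀ x y, ⟪T x, y⟫ = ⟪x, T y⟫)
    (hadd : ∀ x y, T (x + y) = T x + T y)
    (hsmul : ∀ (t : ℝ) x, T (t • x) = t • T x)
    (hpos : ∀ x, 0 ≤ ⟪T x, x⟫)
    (hbnd : ∀ x, ⟪T x, x⟫ ≤ β * ‖x‖ ^ 2) (x : E) :
    ‖T x‖ ^ 2 ≤ β * ⟪T x, x⟫ := by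
  have cs : ∀ v, ⟪T x, v⟫ ^ 2 ≤ ⟪T x, x⟫ * ⟪T v, v⟫ := by
    intro v
    have h : ∀ t : ℝ, 0 ≤ ⟪T v, v⟫ * (t * t) + (2 * ⟪T x, v⟫) * t + ⟪T x, x⟫ := by
      intro t
      have h0 := hpos (x + t • v)
      have hexp : ⟪T (x + t • v), x + t • v⟫
          = ⟪T v, v⟫ * (t * t) + (2 * ⟪T x, v⟫) * t + ⟪T x, x⟫ := by
        have h1 : ⟪T v, x⟫ = ⟪T x, v⟫ := by
          rw [hsym v x, real_inner_comm]
        rw [hadd, hsmul]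
        simp only [inner_add_left, inner_add_right, real_inner_smul_left,
          real_inner_smul_right, h1]
        ring
      linarith [hexp ▸ h0]
    have hd := discrim_le_zero h
    rw [discrim] at hd
    nlinarith [hd]
  have h1 := cs (T x)
  have h2 : ⟪T (T x), T x⟫ ≤ β * ‖T x‖ ^ 2 := hbnd (T x)
  have h3 : ⟪T x, T x⟫ = ‖T x‖ ^ 2 := real_inner_self_eq_norm_sq (T x)
  have h0 : 0 ≤ ⟪T x, x⟫ := hpos x
  rcases eq_or_lt_of_le (norm_nonneg (T x)) with h | h
  · have hz : T x = 0 := by rw [← norm_eq_zero, ← h]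
    simp [hz]
  · have hTx : 0 < ‖T x‖ ^ 2 := by positivity
    nlinarith

set_option maxHeartbeats 1000000 in
/-- **Convergence of deep equilibrium iterates.** Under `μ‖u‖² ≤ ‖Au‖² ≤ L‖u‖²`,
`R − Id` `ε`-Lipschitz with `ε < 1 + μ`, and `0 < η < 1/(L+1)`, the operator
`Γ(u) = u + η Aᵀ(y − Au) − η R(u)` is a contraction with constant
`γ = 1 − η(1+μ) + ηε < 1`; hence it has a unique fixed point `u∞`, and the
iterates `u^{k+1} = Γ(u^k)` converge to `u∞` from any initial point. -/
theorem stmt4 {n m' : ℕ}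
    (A : EuclideanSpace ℝ (Fin n) →L[ℝ] EuclideanSpace ℝ (Fin m'))
    (μ L : ℝ) (hμ0 : 0 ≤ μ) (hL0 : 0 ≤ L)
    (hμ : ∀ u : EuclideanSpace ℝ (Fin n), μ * ‖u‖ ^ 2 ≤ ‖A u‖ ^ 2)
    (hL : ∀ u : EuclideanSpace ℝ (Fin n), ‖A u‖ ^ 2 ≤ L * ‖u‖ ^ 2)
    (R : EuclideanSpace ℝ (Fin n) → EuclideanSpace ℝ (Fin n))
    (ε : ℝ) (hε0 : 0 ≤ ε) (hεμ : ε < 1 + μ)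
    (hR : ∀ u v : EuclideanSpace ℝ (Fin n),
      ‖(R u - u) - (R v - v)‖ ≤ ε * ‖u - v‖)
    (y : EuclideanSpace ℝ (Fin m'))
    (η : ℝ) (hη0 : 0 < η) (hη1 : η < 1 / (L + 1))
    (Γ : EuclideanSpace ℝ (Fin n) → EuclideanSpace ℝ (Fin n))
    (hΓ : ∀ u, Γ u = u + η • (ContinuousLinearMap.adjoint A) (y - A u) - η • R u) :
    (1 - η * (1 + μ) + η * ε < 1) ∧
    (∀ u utilde : EuclideanSpace ℝ (Fin n),
      ‖Γ u - Γ utilde‖ ≤ (1 - η * (1 + μ) + η * ε) * ‖u - utilde‖) ∧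
    ∃ uinf : EuclideanSpace ℝ (Fin n),
      Γ uinf = uinf ∧
      (∀ v, Γ v = v → v = uinf) ∧
      ∀ u0 : EuclideanSpace ℝ (Fin n),
        Tendsto (fun k => Γ^[k] u0) atTop (𝓝 uinf) := by
  have hL1 : 0 < L + 1 := by linarith
  have hηL : η * (L + 1) < 1 := by
    rw [lt_div_iff₀ hL1] at hη1; linarith
  have hγ1 : 1 - η * (1 + μ) + η * ε < 1 := by nlinarith
  rcases subsingleton_or_nontrivial (EuclideanSpace ℝ (Fin n)) with hsub | hnt
  · -- trivial space
    refine ⟨hγ1, ?_, ?_⟩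
    · intro u v
      rw [Subsingleton.elim u v]
      simp
    · refine ⟨Γ 0, Subsingleton.elim _ _, fun v _ => Subsingleton.elim _ _, fun u0 => ?_⟩
      have : (fun k => Γ^[k] u0) = fun _ => Γ 0 := by
        funext k; exact Subsingleton.elim _ _
      rw [this]
      exact tendsto_const_nhds
  · -- nontrivial space: μ ≤ L
    obtain ⟨x0, hx0⟩ := exists_ne (0 : EuclideanSpace ℝ (Fin n))
    have hx0n : 0 < ‖x0‖ ^ 2 := by
      have := norm_pos_iff.mpr hx0
      positivity
    have hμL : μ ≤ L := by nlinarith [hμ x0, hL x0]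
    have hc : 0 < 1 - η * (1 + μ) := by nlinarith
    set c : ℝ := 1 - η * (1 + μ) with hcdef
    set γ : ℝ := 1 - η * (1 + μ) + η * ε with hγdef
    have hγ0 : 0 ≤ γ := by nlinarith
    set T : EuclideanSpace ℝ (Fin n) → EuclideanSpace ℝ (Fin n) :=
      fun x => (ContinuousLinearMap.adjoint A) (A x) - μ • x with hTdef
    have hTinner : ∀ x z : EuclideanSpace ℝ (Fin n),
        ⟪T x, z⟫ = ⟪A x, A z⟫ - μ * ⟪x, z⟫ := by
      intro x z
      simp only [hTdef]
      rw [inner_sub_left, real_inner_smul_left, ContinuousLinearMap.adjoint_inner_left]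
    have hsym : ∀ x z : EuclideanSpace ℝ (Fin n), ⟪T x, z⟫ = ⟪x, T z⟫ := by
      intro x z
      rw [hTinner x z]
      simp only [hTdef]
      rw [inner_sub_right, real_inner_smul_right, ContinuousLinearMap.adjoint_inner_right]
    have hpos : ∀ x : EuclideanSpace ℝ (Fin n), 0 ≤ ⟪T x, x⟫ := by
      intro x
      rw [hTinner, real_inner_self_eq_norm_sq, real_inner_self_eq_norm_sq]
      have := hμ x; linarith
    have hbnd : ∀ x : EuclideanSpace ℝ (Fin n), ⟪T x, x⟫ ≤ (L - μ) * ‖x‖ ^ 2 := by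
      intro x
      rw [hTinner, real_inner_self_eq_norm_sq, real_inner_self_eq_norm_sq]
      have := hL x; nlinarith
    have hadd : ∀ x z : EuclideanSpace ℝ (Fin n), T (x + z) = T x + T z := by
      intro x z
      simp only [hTdef, map_add, smul_add]
      abel
    have hsmul : ∀ (t : ℝ) (x : EuclideanSpace ℝ (Fin n)), T (t • x) = t • T x := by
      intro t x
      simp only [hTdef, map_smul, smul_sub, smul_comm t μ]
    have hCS := cs_pos T (L - μ) hsym hadd hsmul hpos hbnd
    have hcontr : ∀ u v : EuclideanSpace ℝ (Fin n), ‖Γ u - Γ v‖ ≤ γ * ‖u - v‖ := by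
      intro u v
      set w : EuclideanSpace ℝ (Fin n) := u - v with hwdef
      have hdecomp : Γ u - Γ v = (c • w - η • T w) - η • ((R u - u) - (R v - v)) := by
        have e1 : (ContinuousLinearMap.adjoint A) (y - A u)
            = (ContinuousLinearMap.adjoint A) y - (ContinuousLinearMap.adjoint A) (A u) :=
          map_sub _ _ _
        have e2 : (ContinuousLinearMap.adjoint A) (y - A v)
            = (ContinuousLinearMap.adjoint A) y - (ContinuousLinearMap.adjoint A) (A v) :=
          map_sub _ _ _
        have e3 : (ContinuousLinearMap.adjoint A) (A (u - v))
            = (ContinuousLinearMap.adjoint A) (A u) - (ContinuousLinearMap.adjoint A) (A v) := by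
          rw [map_sub, map_sub]
        have hTw : T w = ((ContinuousLinearMap.adjoint A) (A u)
            - (ContinuousLinearMap.adjoint A) (A v)) - μ • w := by
          simp only [hTdef, hwdef]
          rw [e3]
        rw [hΓ u, hΓ v, e1, e2, hTw, hwdef, hcdef]
        module
      have hkey : ‖c • w - η • T w‖ ≤ c * ‖w‖ := by
        have hexp : ‖c • w - η • T w‖ ^ 2
            = c ^ 2 * ‖w‖ ^ 2 - 2 * c * η * ⟪T w, w⟫ + η ^ 2 * ‖T w‖ ^ 2 := by
          rw [← real_inner_self_eq_norm_sq]
          rw [inner_sub_left, inner_sub_right, inner_sub_right]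
          rw [real_inner_smul_left, real_inner_smul_left, real_inner_smul_left,
            real_inner_smul_right, real_inner_smul_right, real_inner_smul_right]
          rw [real_inner_self_eq_norm_sq, real_inner_self_eq_norm_sq,
            real_inner_comm w (T w)]
          rw [norm_smul η (T w), Real.norm_eq_abs, mul_pow, sq_abs]
          ring
        have hsq : ‖c • w - η • T w‖ ^ 2 ≤ (c * ‖w‖) ^ 2 := by
          have h1 := hCS w
          have h2 := hpos w
          have h3 : η * (L - μ) ≤ 2 * c := by
            simp only [hcdef]; nlinarith
          have h4 : η ^ 2 * ‖T w‖ ^ 2 ≤ 2 * c * η * ⟪T w, w⟫ := by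
            nlinarith [mul_le_mul_of_nonneg_left h1 (sq_nonneg η),
              mul_le_mul_of_nonneg_right h3 (mul_nonneg hη0.le h2)]
          rw [hexp]; nlinarith
        have hcw : 0 ≤ c * ‖w‖ := mul_nonneg hc.le (norm_nonneg w)
        nlinarith [norm_nonneg (c • w - η • T w)]
      calc ‖Γ u - Γ v‖ ≤ ‖c • w - η • T w‖ + ‖η • ((R u - u) - (R v - v))‖ := by
            rw [hdecomp]; exact norm_sub_le _ _
        _ ≤ c * ‖w‖ + η * (ε * ‖w‖) := by
            refine add_le_add hkey ?_
            rw [norm_smul, Real.norm_eq_abs, abs_of_pos hη0]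
            exact mul_le_mul_of_nonneg_left (hR u v) hη0.le
        _ = γ * ‖u - v‖ := by rw [hγdef, hcdef, hwdef]; ring
    refine ⟨hγ1, hcontr, ?_⟩
    have hK : ContractingWith γ.toNNReal Γ := by
      constructor
      · exact_mod_cast Real.toNNReal_lt_one.mpr hγ1
      · refine LipschitzWith.of_dist_le_mul fun x z => ?_
        rw [dist_eq_norm, dist_eq_norm, Real.coe_toNNReal γ hγ0]
        exact hcontr x z
    exact ⟨hK.fixedPoint Γ, hK.fixedPoint_isFixedPt,
      fun v hv => hK.fixedPoint_unique hv, fun u0 => hK.tendsto_iterate_fixedPoint u0⟩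
end

section
/- Let M ⊆ ℝⁿ be a nonempty compact set, let ℙ_r and ℙ_n be Borel probability measures on ℝⁿ with compact support, assume ℙ_r(Mᶜ) = 0 (data manifold assumption), and let P_M : ℝⁿ → M be a measurable map satisfying ‖u − P_M(u)‖ = dist(u, M) for all u, with pushforward (P_M)_#ℙ_n = ℙ_r (low noise assumption). Then the distance function d_M(u) = dist(u, M) is a maximizer of the Wasserstein loss over 1-Lipschitz functions: d_M is 1-Lipschitz, and for every 1-Lipschitz function f : ℝⁿ → ℝ one has ∫ f dℙ_n − ∫ f dℙ_r ≤ ∫ d_M dℙ_n − ∫ d_M dℙ_r. -/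
open MeasureTheory Metric

lemma aux_integrable {E : Type*} [MeasurableSpace E] [MetricSpace E] [BorelSpace E]
    (μ : Measure E) [IsProbabilityMeasure μ] (K : Set E) (hK : IsCompact K)
    (hμ : μ Kᶜ = 0) (f : E → ℝ) (hf : Continuous f) : Integrable f μ := by
  obtain ⟨C, hC⟩ := (hK.image hf).isBounded.subset_closedBall 0
  refine Integrable.mono' (integrable_const C) hf.aestronglyMeasurable ?_
  have : ∀ x ∈ K, ‖f x‖ ≤ C := by
    intro x hx
    have := hC (Set.mem_image_of_mem f hx)
    simpa [Real.norm_eq_abs, Real.dist_eq] using this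
  refine (ae_iff.2 ?_)
  refine measure_mono_null (fun x hx => ?_) hμ
  simp only [Set.mem_setOf_eq, not_le] at hx
  intro hxK
  exact absurd (this x hxK) (not_le.2 hx)

/-- **The distance to the data manifold maximizes the Wasserstein loss.**
Under the data manifold assumption (`ℙ_r(Mᶜ) = 0`, `M` compact nonempty) and the
low-noise assumption (`(P_M)_# ℙ_n = ℙ_r` with `P_M` the metric projection onto
`M`), the distance function `d_M(u) = dist(u, M)` is 1-Lipschitz and maximizes
`f ↦ ∫ f dℙ_n − ∫ f dℙ_r` among all 1-Lipschitz functions `f`. -/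
theorem stmt5 {n : ℕ}
    (M : Set (EuclideanSpace ℝ (Fin n))) (hMne : M.Nonempty) (hMc : IsCompact M)
    (Pr Pn : Measure (EuclideanSpace ℝ (Fin n)))
    [IsProbabilityMeasure Pr] [IsProbabilityMeasure Pn]
    (hPrsupp : ∃ K : Set (EuclideanSpace ℝ (Fin n)), IsCompact K ∧ Pr Kᶜ = 0)
    (hPnsupp : ∃ K : Set (EuclideanSpace ℝ (Fin n)), IsCompact K ∧ Pn Kᶜ = 0)
    (hDMA : Pr Mᶜ = 0)
    (P : EuclideanSpace ℝ (Fin n) → EuclideanSpace ℝ (Fin n))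
    (hPmeas : Measurable P)
    (hPM : ∀ u, P u ∈ M)
    (hPproj : ∀ u, ‖u - P u‖ = infDist u M)
    (hLNA : Measure.map P Pn = Pr) :
    LipschitzWith 1 (fun u => infDist u M) ∧
    ∀ f : EuclideanSpace ℝ (Fin n) → ℝ, LipschitzWith 1 f →
      (∫ u, f u ∂Pn) - (∫ u, f u ∂Pr) ≤
        (∫ u, infDist u M ∂Pn) - (∫ u, infDist u M ∂Pr) := by
  obtain ⟨Kr, hKr, hKr0⟩ := hPrsupp
  obtain ⟨Kn, hKn, hKn0⟩ := hPnsupp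
  have hdL : LipschitzWith 1 (fun u => infDist u M) := lipschitz_infDist_pt M
  refine ⟨hdL, fun f hf => ?_⟩
  -- ∫ infDist dPr = 0
  have hdPr : (∫ u, infDist u M ∂Pr) = 0 := by
    have : (fun u => infDist u M) =ᵐ[Pr] (fun _ => (0:ℝ)) := by
      refine ae_iff.2 (measure_mono_null ?_ hDMA)
      intro x hx hxM
      exact hx (infDist_zero_of_mem hxM)
    rw [integral_congr_ae this, integral_const]
    simp
  -- change ∫ f dPr into ∫ f ∘ P dPn
  have hfm : Continuous f := hf.continuous
  have hfPr : (∫ u, f u ∂Pr) = ∫ u, f (P u) ∂Pn := by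
    rw [← hLNA, integral_map hPmeas.aemeasurable hfm.aestronglyMeasurable]
  have hIfn : Integrable f Pn := aux_integrable Pn Kn hKn hKn0 f hfm
  have hIfP : Integrable (fun u => f (P u)) Pn := by
    have : Integrable f Pr := aux_integrable Pr Kr hKr hKr0 f hfm
    rw [← hLNA] at this
    exact (integrable_map_measure hfm.aestronglyMeasurable hPmeas.aemeasurable).mp this
  have hId : Integrable (fun u => infDist u M) Pn :=
    aux_integrable Pn Kn hKn hKn0 _ (continuous_infDist_pt M)
  rw [hdPr, hfPr, sub_zero, ← integral_sub hIfn hIfP]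
  refine integral_mono (hIfn.sub hIfP) hId (fun u => ?_)
  have h1 : f u - f (P u) ≤ dist u (P u) := by
    have := hf.dist_le_mul u (P u)
    have h2 : dist (f u) (f (P u)) ≤ dist u (P u) := by simpa using this
    calc f u - f (P u) ≤ |f u - f (P u)| := le_abs_self _
      _ = dist (f u) (f (P u)) := (Real.dist_eq _ _).symm
      _ ≤ dist u (P u) := h2
  calc f u - f (P u) ≤ dist u (P u) := h1
    _ = ‖u - P u‖ := dist_eq_norm u (P u)
    _ = infDist u M := hPproj u
end

section
/- Let ℙ_u and ℙ_n be compactly supported Borel probability measures on ℝⁿ, and define the 1-Wasserstein distance by its dual formulation W(μ, ν) = sup { ∫ f dμ − ∫ f dν : f : ℝⁿ → ℝ is 1-Lipschitz }. Let Ψ : ℝⁿ → ℝ be a continuously differentiable 1-Lipschitz function that attains this supremum for the pair (ℙ_n, ℙ_u), i.e. W(ℙ_u, ℙ_n) = ∫ Ψ dℙ_n − ∫ Ψ dℙ_u, and suppose ∫ ‖∇Ψ‖² dℙ_n = 1. For η ≥ 0 define g_η(u) = u − η·∇Ψ(u) and ℙ_η = (g_η)_#ℙ_n, and suppose the function η ↦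 W(ℙ_u, ℙ_η) admits a left and a right derivative at η = 0 and they are equal. Then d/dη W(ℙ_u, ℙ_η)|_{η=0} = −∫ ‖∇Ψ‖² dℙ_n = −1. -/
/-!
Testing the dual problem for `ℙ_η` against the fixed potential `Ψ` gives
`W(ℙ_u, ℙ_η) ≥ ∫ Ψ ∘ g_η dℙ_n - ∫ Ψ dℙ_u`, with equality at `η = 0` because `Ψ` is optimal.
Two functions that touch at `0` with one lying above the other have the same derivative there
when both are differentiable, and differentiating under the integral sign gives
`d/dη ∫ Ψ ∘ g_η dℙ_n = -∫ ‖∇Ψ‖² dℙ_n` at `η = 0`.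
-/

open MeasureTheory Filter Topology

/-- The 1-Wasserstein distance via its Kantorovich dual formulation:
supremum over 1-Lipschitz functions `f` of `∫ f dμ − ∫ f dν`. -/
noncomputable def wass1 {n : ℕ}
    (μ ν : Measure (EuclideanSpace ℝ (Fin n))) : ℝ :=
  ⨆ f : {f : EuclideanSpace ℝ (Fin n) → ℝ // LipschitzWith 1 f},
    (∫ x, f.1 x ∂μ) - ∫ x, f.1 x ∂ν

section Calculus

variable {E : Type*} [NormedAddCommGroup E] [InnerProductSpace ℝ E] [CompleteSpace E]
  {f : E → ℝ}

theorem LipschitzWith.norm_gradient_le {K : NNReal} (hf : LipschitzWith K f) (x : E) :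
    ‖gradient f x‖ ≤ K := by
  rw [gradient, LinearIsometryEquiv.norm_map]
  exact norm_fderiv_le_of_lipschitz ℝ hf

theorem fderiv_apply_gradient (x : E) : fderiv ℝ f x (gradient f x) = ‖gradient f x‖ ^ 2 := by
  rw [← real_inner_self_eq_norm_sq, gradient, InnerProductSpace.toDual_symm_apply]

theorem ContDiff.continuous_gradient (hf : ContDiff ℝ 1 f) : Continuous (gradient f) :=
  (InnerProductSpace.toDual ℝ E).symm.continuous.comp (hf.continuous_fderiv one_ne_zero)

end Calculus

theorem HasDerivAt.unique_of_eventually_le_of_eq {f g : ℝ → ℝ} {f' g' a : ℝ}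
    (hf : HasDerivAt f f' a) (hg : HasDerivAt g g' a) (hle : ∀ᶠ x in 𝓝 a, g x ≤ f x)
    (heq : f a = g a) : f' = g' := by
  have hmin : IsLocalMin (f - g) a := by
    filter_upwards [hle] with x hx
    simp only [Pi.sub_apply, heq, sub_self]
    linarith
  linarith [hmin.hasDerivAt_eq_zero (hf.sub hg)]

theorem hasDerivAt_of_hasDerivWithinAt_Iic_Ici {f : ℝ → ℝ} {f' a : ℝ}
    (hl : HasDerivWithinAt f f' (Set.Iic a) a) (hr : HasDerivWithinAt f f' (Set.Ici a) a) :
    HasDerivAt f f' a := by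
  simpa only [Set.Iic_union_Ici, hasDerivWithinAt_univ] using hl.union hr

theorem lipschitzWith_sub_smul {E : Type*} [NormedAddCommGroup E] [NormedSpace ℝ E] (x v : E) :
    LipschitzWith ‖v‖₊ fun η : ℝ => x - η • v :=
  LipschitzWith.of_dist_le_mul fun η η' => by
    rw [dist_eq_norm, dist_eq_norm, show x - η • v - (x - η' • v) = (η' - η) • v by module,
      norm_smul, norm_sub_rev, mul_comm, coe_nnnorm]

theorem hasDerivAt_integral_comp_sub_smul {E : Type*} [NormedAddCommGroup E] [NormedSpace ℝ E]
    [MeasurableSpace E] [OpensMeasurableSpace E] {μ : Measure E} [IsFiniteMeasure μ]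
    {Ψ : E → ℝ} (hΨ : ContDiff ℝ 1 Ψ) {K : NNReal} (hΨlip : LipschitzWith K Ψ)
    (hΨint : Integrable Ψ μ) {V : E → E} (hV : Continuous V) {C : ℝ} (hVC : ∀ x, ‖V x‖ ≤ C) :
    HasDerivAt (fun η : ℝ => ∫ x, Ψ (x - η • V x) ∂μ) (-∫ x, fderiv ℝ Ψ x (V x) ∂μ) 0 := by
  have hcont : ∀ η : ℝ, Continuous fun x => Ψ (x - η • V x) := fun η =>
    hΨlip.continuous.comp (continuous_id.sub (hV.const_smul η))
  have hF'cont : Continuous fun x => -fderiv ℝ Ψ x (V x) :=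
    ((hΨ.continuous_fderiv one_ne_zero).clm_apply hV).neg
  rw [← integral_neg]
  refine (hasDerivAt_integral_of_dominated_loc_of_lip (bound := fun _ => K * C)
    (s := Set.univ) Filter.univ_mem
    (Eventually.of_forall fun η => (hcont η).aestronglyMeasurable)
    (by simpa using hΨint) hF'cont.aestronglyMeasurable
    (Eventually.of_forall fun x => ?_) (integrable_const _)
    (Eventually.of_forall fun x => ?_)).2
  · refine ((hΨlip.comp (lipschitzWith_sub_smul x (V x))).weaken ?_).lipschitzOnWith
    rw [← NNReal.coe_le_coe, Real.coe_nnabs, NNReal.coe_mul, coe_nnnorm]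
    exact (mul_le_mul_of_nonneg_left (hVC x) K.2).trans (le_abs_self _)
  · have hline : HasDerivAt (fun η : ℝ => x - η • V x) (-V x) 0 := by
      simpa using ((hasDerivAt_id (0 : ℝ)).smul_const (V x)).const_sub x
    have := ((hΨ.differentiable one_ne_zero) x).hasFDerivAt.comp_hasDerivAt_of_eq
      (0 : ℝ) hline (by simp)
    rwa [map_neg] at this

section Integration

variable {E : Type*} [PseudoMetricSpace E] [MeasurableSpace E] {μ : Measure E}

theorem exists_isCompact_map_compl_null [OpensMeasurableSpace E] {F : Type*}
    [TopologicalSpace F] [MeasurableSpace F] [BorelSpace F] [T2Space F]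
    (hμ : ∃ K : Set E, IsCompact K ∧ μ Kᶜ = 0) {g : E → F} (hg : Continuous g) :
    ∃ K : Set F, IsCompact K ∧ μ.map g Kᶜ = 0 := by
  obtain ⟨K, hK, hK0⟩ := hμ
  refine ⟨g '' K, hK.image hg, ?_⟩
  rw [Measure.map_apply hg.measurable (hK.image hg).isClosed.measurableSet.compl]
  exact measure_mono_null (fun x hx hxK => hx (Set.mem_image_of_mem g hxK)) hK0

theorem exists_ae_mem_closedBall_of_isCompact_compl_null
    (hμ : ∃ K : Set E, IsCompact K ∧ μ Kᶜ = 0) (x₀ : E) :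
    ∃ R : ℝ, ∀ᵐ x ∂μ, x ∈ Metric.closedBall x₀ R := by
  obtain ⟨K, hK, hK0⟩ := hμ
  obtain ⟨R, hR⟩ := hK.isBounded.subset_closedBall x₀
  exact ⟨R, mem_of_superset (mem_ae_iff.mpr hK0) hR⟩

theorem LipschitzWith.integrable_of_ae_mem_closedBall [OpensMeasurableSpace E]
    [IsFiniteMeasure μ] {f : E → ℝ} {K : NNReal} (hf : LipschitzWith K f) {x₀ : E} {R : ℝ}
    (hμ : ∀ᵐ x ∂μ, x ∈ Metric.closedBall x₀ R) : Integrable f μ := by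
  refine Integrable.of_bound hf.continuous.aestronglyMeasurable (‖f x₀‖ + K * R) ?_
  filter_upwards [hμ] with x hx
  calc ‖f x‖ ≤ ‖f x₀‖ + dist (f x) (f x₀) := by
        rw [dist_eq_norm]; exact norm_le_norm_add_norm_sub' (f x) (f x₀)
    _ ≤ ‖f x₀‖ + K * R := by
      gcongr
      exact hf.dist_le_mul_of_le hx

theorem LipschitzWith.abs_integral_sub_le [OpensMeasurableSpace E] [IsProbabilityMeasure μ]
    {f : E → ℝ} {K : NNReal} (hf : LipschitzWith K f) {x₀ : E} {R : ℝ}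
    (hμ : ∀ᵐ x ∂μ, x ∈ Metric.closedBall x₀ R) : |∫ x, f x ∂μ - f x₀| ≤ K * R := by
  have hint := hf.integrable_of_ae_mem_closedBall hμ
  have hsub : ∫ x, f x ∂μ - f x₀ = ∫ x, (f x - f x₀) ∂μ := by
    rw [integral_sub hint (integrable_const _), integral_const, probReal_univ, one_smul]
  rw [hsub, ← Real.norm_eq_abs]
  simpa using norm_integral_le_of_norm_le_const (μ := μ)
    (hμ.mono fun x hx => (dist_eq_norm (f x) (f x₀)).symm.trans_le
      (hf.dist_le_mul_of_le hx))

end Integration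

section Wasserstein

variable {n : ℕ} {μ ν : Measure (EuclideanSpace ℝ (Fin n))}

theorem bddAbove_wass1_range [IsProbabilityMeasure μ] [IsProbabilityMeasure ν]
    (hμ : ∃ K : Set (EuclideanSpace ℝ (Fin n)), IsCompact K ∧ μ Kᶜ = 0)
    (hν : ∃ K : Set (EuclideanSpace ℝ (Fin n)), IsCompact K ∧ ν Kᶜ = 0) :
    BddAbove (Set.range fun f : {f : EuclideanSpace ℝ (Fin n) → ℝ // LipschitzWith 1 f} =>
      (∫ x, f.1 x ∂μ) - ∫ x, f.1 x ∂ν) := by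
  obtain ⟨R₁, hR₁⟩ := exists_ae_mem_closedBall_of_isCompact_compl_null hμ 0
  obtain ⟨R₂, hR₂⟩ := exists_ae_mem_closedBall_of_isCompact_compl_null hν 0
  refine ⟨R₁ + R₂, ?_⟩
  rintro _ ⟨⟨f, hf⟩, rfl⟩
  have h₁ := hf.abs_integral_sub_le hR₁
  have h₂ := hf.abs_integral_sub_le hR₂
  simp only [NNReal.coe_one, one_mul] at h₁ h₂
  linarith [(abs_le.mp h₁).2, (abs_le.mp h₂).1]

theorem integral_sub_integral_le_wass1 [IsProbabilityMeasure μ] [IsProbabilityMeasure ν]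
    (hμ : ∃ K : Set (EuclideanSpace ℝ (Fin n)), IsCompact K ∧ μ Kᶜ = 0)
    (hν : ∃ K : Set (EuclideanSpace ℝ (Fin n)), IsCompact K ∧ ν Kᶜ = 0)
    {f : EuclideanSpace ℝ (Fin n) → ℝ} (hf : LipschitzWith 1 f) :
    (∫ x, f x ∂ν) - ∫ x, f x ∂μ ≤ wass1 μ ν := by
  have := le_ciSup (bddAbove_wass1_range hμ hν) ⟨fun x => -f x, hf.neg⟩
  simp only [integral_neg] at this
  unfold wass1
  linarith

end Wasserstein

/-- **Gradient descent on an optimal Kantorovich potential decreases the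
Wasserstein distance at unit speed.** If `Ψ` is a `C¹`, 1-Lipschitz maximizer of
the dual problem for `W(ℙ_u, ℙ_n)` with `∫‖∇Ψ‖² dℙ_n = 1`, `g_η(u) = u − η∇Ψ(u)`,
`ℙ_η = (g_η)_#ℙ_n`, and `η ↦ W(ℙ_u, ℙ_η)` has equal one-sided derivatives at
`η = 0`, then `d/dη W(ℙ_u, ℙ_η)|₀ = −∫‖∇Ψ‖² dℙ_n = −1`. -/
theorem stmt6 {n : ℕ}
    (Pu Pn : Measure (EuclideanSpace ℝ (Fin n)))
    [IsProbabilityMeasure Pu] [IsProbabilityMeasure Pn]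
    (hPusupp : ∃ K : Set (EuclideanSpace ℝ (Fin n)), IsCompact K ∧ Pu Kᶜ = 0)
    (hPnsupp : ∃ K : Set (EuclideanSpace ℝ (Fin n)), IsCompact K ∧ Pn Kᶜ = 0)
    (Ψ : EuclideanSpace ℝ (Fin n) → ℝ)
    (hΨC1 : ContDiff ℝ 1 Ψ) (hΨlip : LipschitzWith 1 Ψ)
    (hΨopt : wass1 Pu Pn = (∫ x, Ψ x ∂Pn) - ∫ x, Ψ x ∂Pu)
    (hΨnorm : (∫ x, ‖gradient Ψ x‖ ^ 2 ∂Pn) = 1)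
    (W : ℝ → ℝ)
    (hW : ∀ η : ℝ,
      W η = wass1 Pu (Measure.map (fun u => u - η • gradient Ψ u) Pn))
    (hderiv : ∃ d : ℝ,
      HasDerivWithinAt W d (Set.Iic 0) 0 ∧ HasDerivWithinAt W d (Set.Ici 0) 0) :
    HasDerivAt W (-(∫ x, ‖gradient Ψ x‖ ^ 2 ∂Pn)) 0 ∧
      -(∫ x, ‖gradient Ψ x‖ ^ 2 ∂Pn) = -1 := by
  obtain ⟨d, hdl, hdr⟩ := hderiv
  have hW' : HasDerivAt W d 0 := hasDerivAt_of_hasDerivWithinAt_Iic_Ici hdl hdr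
  have hh : HasDerivAt (fun η : ℝ => ∫ x, Ψ (x - η • gradient Ψ x) ∂Pn)
      (-∫ x, ‖gradient Ψ x‖ ^ 2 ∂Pn) 0 := by
    obtain ⟨R, hR⟩ := exists_ae_mem_closedBall_of_isCompact_compl_null hPnsupp 0
    have := hasDerivAt_integral_comp_sub_smul hΨC1 hΨlip
      (hΨlip.integrable_of_ae_mem_closedBall hR) hΨC1.continuous_gradient hΨlip.norm_gradient_le
    simpa only [fderiv_apply_gradient] using this
  have hle : ∀ η : ℝ, (∫ x, Ψ (x - η • gradient Ψ x) ∂Pn) - ∫ x, Ψ x ∂Pu ≤ W η := by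
    intro η
    have hg : Continuous fun u => u - η • gradient Ψ u :=
      continuous_id.sub (hΨC1.continuous_gradient.const_smul η)
    have := Measure.isProbabilityMeasure_map (μ := Pn) hg.aemeasurable
    rw [hW η, ← integral_map hg.aemeasurable hΨlip.continuous.aestronglyMeasurable]
    exact integral_sub_integral_le_wass1 hPusupp
      (exists_isCompact_map_compl_null hPnsupp hg) hΨlip
  have heq : W 0 = (∫ x, Ψ (x - (0 : ℝ) • gradient Ψ x) ∂Pn) - ∫ x, Ψ x ∂Pu := by
    simp [hW, hΨopt]
  have hd : d = -∫ x, ‖gradient Ψ x‖ ^ 2 ∂Pn :=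
    hW'.unique_of_eventually_le_of_eq (hh.sub_const _) (Eventually.of_forall hle) heq
  exact ⟨hd ▸ hW', by rw [hΨnorm]⟩
end

section
/- Let D : ℝⁿ → ℝⁿ be a symmetric linear map whose eigenvalues all lie in the interval [c, 1] for some c > 0 (so D is positive definite, nonexpansive, and invertible). Define the quadratic functional J(x) = (1/2)⟨x, (D⁻¹ − Id)x⟩. Then J is convex, and D is the proximal operator of J: for every y ∈ ℝⁿ, D(y) is the unique minimizer over u ∈ ℝⁿ of J(u) + (1/2)‖u − y‖². -/
open scoped RealInnerProductSpace

/-- **A symmetric nonexpansive positive-definite linear denoiser is a proximal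
operator.** If `D` is symmetric with all eigenvalues in `[c, 1]`, `c > 0`, then
`D` is invertible, the functional `J(x) = ½⟨x, (D⁻¹ − Id)x⟩` is convex, and for
every `y`, `D y` is the unique minimizer of `u ↦ J(u) + ½‖u − y‖²` (i.e. `D` is
the proximal operator of `J`). -/
theorem stmt8 {n : ℕ}
    (D : EuclideanSpace ℝ (Fin n) →ₗ[ℝ] EuclideanSpace ℝ (Fin n))
    (hsym : ∀ x y : EuclideanSpace ℝ (Fin n), ⟪D x, y⟫ = ⟪x, D y⟫)
    (c : ℝ) (hc : 0 < c)
    (heig : ∀ μ : ℝ, Module.End.HasEigenvalue (D : Module.End ℝ (EuclideanSpace ℝ (Fin n))) μ →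
      μ ∈ Set.Icc c 1) :
    ∃ Dinv : EuclideanSpace ℝ (Fin n) →ₗ[ℝ] EuclideanSpace ℝ (Fin n),
      Dinv.comp D = LinearMap.id ∧ D.comp Dinv = LinearMap.id ∧
      ConvexOn ℝ Set.univ (fun x => (1 / 2 : ℝ) * ⟪x, Dinv x - x⟫) ∧
      ∀ y : EuclideanSpace ℝ (Fin n),
        (∀ u : EuclideanSpace ℝ (Fin n),
          (1 / 2 : ℝ) * ⟪D y, Dinv (D y) - D y⟫ + (1 / 2) * ‖D y - y‖ ^ 2 ≤
            (1 / 2 : ℝ) * ⟪u, Dinv u - u⟫ + (1 / 2) * ‖u - y‖ ^ 2) ∧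
        (∀ u : EuclideanSpace ℝ (Fin n),
          (∀ w : EuclideanSpace ℝ (Fin n),
            (1 / 2 : ℝ) * ⟪u, Dinv u - u⟫ + (1 / 2) * ‖u - y‖ ^ 2 ≤
              (1 / 2 : ℝ) * ⟪w, Dinv w - w⟫ + (1 / 2) * ‖w - y‖ ^ 2) →
          u = D y) := by
  set E := EuclideanSpace ℝ (Fin n)
  have hD : (D : Module.End ℝ E).IsSymmetric := hsym
  have hrank : Module.finrank ℝ E = n := finrank_euclideanSpace_fin
  set b := hD.eigenvectorBasis hrank with hbdef
  set μ := hD.eigenvalues hrank with hμdef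
  have hb : ∀ i, D (b i) = μ i • b i := hD.apply_eigenvectorBasis hrank
  have hμ : ∀ i, μ i ∈ Set.Icc c 1 := fun i => heig _ (hD.hasEigenvalue_eigenvalues hrank i)
  -- key positivity lemma
  have key : ∀ (S : E →ₗ[ℝ] E) (lam : Fin n → ℝ), (∀ i, S (b i) = lam i • b i) →
      (∀ i, 0 ≤ lam i) → ∀ x : E, 0 ≤ ⟪x, S x⟫ := by
    intro S lam hS hlam x
    have hSx : S x = ∑ i, (lam i * b.repr x i) • b i := by
      conv_lhs => rw [← b.sum_repr x]
      rw [map_sum]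
      refine Finset.sum_congr rfl fun i _ => ?_
      rw [map_smul, hS i, smul_smul, mul_comm]
    have hval : ⟪x, S x⟫ = ∑ i, lam i * (b.repr x i) ^ 2 := by
      rw [hSx, inner_sum]
      refine Finset.sum_congr rfl fun i _ => ?_
      rw [real_inner_smul_right, real_inner_comm, ← b.repr_apply_apply]
      ring
    rw [hval]
    exact Finset.sum_nonneg fun i _ =>
      mul_nonneg (hlam i) (sq_nonneg _)
  -- lower bound: c‖x‖² ≤ ⟪x, D x⟫
  have hlower : ∀ x : E, c * ⟪x, x⟫ ≤ ⟪x, D x⟫ := by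
    intro x
    have h := key (D - c • LinearMap.id) (fun i => μ i - c)
      (fun i => by simp [hb i, sub_smul]) (fun i => sub_nonneg.mpr (hμ i).1) x
    simp only [LinearMap.sub_apply, LinearMap.smul_apply, LinearMap.id_apply,
      inner_sub_right, real_inner_smul_right] at h
    linarith
  -- D is bijective
  have hinj : Function.Injective D := by
    rw [← LinearMap.ker_eq_bot, LinearMap.ker_eq_bot']
    intro x hx
    have h1 := hlower x
    rw [hx, inner_zero_right] at h1
    have h2 : ⟪x, x⟫ ≤ 0 := by
      by_contra h
      push_neg at h
      nlinarith
    have := real_inner_self_nonneg (x := x)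
    have hxx : ⟪x, x⟫ = 0 := le_antisymm h2 this
    exact inner_self_eq_zero.mp hxx
  have hsurj : Function.Surjective D := (LinearMap.injective_iff_surjective).mp hinj
  let eD : E ≃ₗ[ℝ] E := LinearEquiv.ofBijective D ⟨hinj, hsurj⟩
  set Dinv := eD.symm.toLinearMap with hDinvdef
  have hDL : ∀ x : E, Dinv (D x) = x := fun x => eD.symm_apply_apply x
  have hDR : ∀ x : E, D (Dinv x) = x := fun x => eD.apply_symm_apply x
  have hsyminv : ∀ x y : E, ⟪Dinv x, y⟫ = ⟪x, Dinv y⟫ := by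
    intro x y
    have h := hsym (Dinv x) (Dinv y)
    rw [hDR] at h
    calc ⟪Dinv x, y⟫ = ⟪Dinv x, D (Dinv y)⟫ := by rw [hDR]
      _ = ⟪x, Dinv y⟫ := h.symm
  have hA : ∀ x : E, ⟪x, x⟫ ≤ ⟪x, Dinv x⟫ := by
    intro x
    have hz := key (D - D ∘ₗ D) (fun i => μ i - μ i ^ 2)
      (fun i => by
        simp only [LinearMap.sub_apply, LinearMap.comp_apply, hb i, map_smul, smul_smul,
          sub_smul]
        ring_nf)
      (fun i => by
        have h1 := (hμ i).1
        have h2 := (hμ i).2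
        show (0:ℝ) ≤ μ i - μ i ^ 2
        nlinarith) (Dinv x)
    simp only [LinearMap.sub_apply, LinearMap.comp_apply, inner_sub_right] at hz
    have h1 : ⟪Dinv x, D (Dinv x)⟫ = ⟪x, Dinv x⟫ := by
      rw [← hsym (Dinv x) (Dinv x), hDR, real_inner_comm]
    have h2 : ⟪Dinv x, D (D (Dinv x))⟫ = ⟪x, x⟫ := by
      rw [← hsym (Dinv x) (D (Dinv x)), hDR]
    rw [h1, h2] at hz
    linarith
  refine ⟨Dinv, LinearMap.ext fun x => hDL x, LinearMap.ext fun x => hDR x, ?_, ?_⟩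
  · -- convexity
    refine ⟨convex_univ, ?_⟩
    intro x _ y _ a bb ha hb2 hab
    have hbb : bb = 1 - a := by linarith
    subst hbb
    simp only [smul_eq_mul]
    have hv := hA (x - y)
    simp only [map_sub, inner_sub_left, inner_sub_right] at hv ⊢
    have hc1 : ⟪y, Dinv x⟫ = ⟪x, Dinv y⟫ := by rw [← hsyminv, real_inner_comm]
    have hc2 : ⟪y, x⟫ = ⟪x, y⟫ := real_inner_comm x y
    simp only [map_add, map_smul, inner_add_left, inner_add_right, real_inner_smul_left,
      real_inner_smul_right, hc1, hc2]
    nlinarith [mul_nonneg ha (by linarith : (0:ℝ) ≤ 1 - a)]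
  · -- minimizer part
    intro y
    have hnorm : ∀ w : E, ‖w - y‖ ^ 2 = ⟪w - y, w - y⟫ :=
      fun w => (real_inner_self_eq_norm_sq _).symm
    have hFdiff : ∀ u : E,
        ((1 / 2 : ℝ) * ⟪u, Dinv u - u⟫ + (1 / 2) * ‖u - y‖ ^ 2) -
        ((1 / 2 : ℝ) * ⟪D y, Dinv (D y) - D y⟫ + (1 / 2) * ‖D y - y‖ ^ 2) =
        (1 / 2 : ℝ) * ⟪u - D y, Dinv (u - D y)⟫ := by
      intro u
      have e1 : Dinv (D y) = y := hDL y
      have e2 : ⟪D y, Dinv u⟫ = ⟪u, y⟫ := by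
        rw [← hsyminv, e1, real_inner_comm]
      have e3 : ⟪y, u⟫ = ⟪u, y⟫ := real_inner_comm u y
      have e4 : ⟪D y, y⟫ = ⟪y, D y⟫ := real_inner_comm _ _
      rw [hnorm u, hnorm (D y)]
      simp only [map_sub, inner_sub_left, inner_sub_right, e1, e2, e3, e4]
      ring
    constructor
    · intro u
      have h1 := hFdiff u
      have h2 := hA (u - D y)
      have h3 : (0:ℝ) ≤ ⟪u - D y, u - D y⟫ := real_inner_self_nonneg
      linarith
    · intro u hu
      have h1 := hu (D y)
      have h2 := hFdiff u
      have h3 := hA (u - D y)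
      have h4 : ⟪u - D y, u - D y⟫ = 0 := le_antisymm (by linarith) real_inner_self_nonneg
      have h5 : u - D y = 0 := inner_self_eq_zero.mp h4
      exact sub_eq_zero.mp h5
end

section
/- Let D : ℝⁿ → ℝⁿ be a symmetric linear map whose eigenvalues all lie in [c, 1] for some c > 0, define J(x) = (1/2)⟨x, (D⁻¹ − Id)x⟩, and let τ > 0. Then the linear map τD⁻¹ − (τ−1)·Id is invertible, and the proximal operator of the scaled functional τJ is given by the spectral filter prox_{τJ} = (τD⁻¹ − (τ−1)·Id)⁻¹; in particular, if v is an eigenvector of D with eigenvalue λ ∈ [c,1], then prox_{τJ}(v) = (λ/(τ − λ(τ−1)))·v. -/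
/-!
Since `0` is not an eigenvalue of `D`, `D` is invertible. If `μ` is an eigenvalue of
`T = D⁻¹ - Id`, then `(1 + μ)⁻¹ ∈ (0, 1]` is an eigenvalue of `D`, so `μ ≥ 0` and the symmetric
map `T` is positive semidefinite. Hence `τT + Id = τD⁻¹ - (τ - 1)Id` is injective, so invertible.
If `(τT + Id) p = y`, completing the square gives
`J(u) + ‖u - y‖²/(2τ) = J(p) + ‖p - y‖²/(2τ) + ½⟪u - p, T(u - p)⟫ + ‖u - p‖²/(2τ)`,
so `p` is the unique minimizer. On an eigenvector of `D` with eigenvalue `λ`, `τD⁻¹ - (τ - 1)Id`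
acts as the scalar `τ/λ - (τ - 1)`, whose inverse is `λ/(τ - λ(τ - 1))`.
-/

open scoped RealInnerProductSpace
open Module.End

theorem LinearEquiv.symm_apply_eq_inv_smul {K V : Type*} [Field K] [AddCommGroup V] [Module K V]
    (e : V ≃ₗ[K] V) {v : V} {k : K} (h : e v = k • v) : e.symm v = k⁻¹ • v := by
  rcases eq_or_ne k 0 with rfl | hk
  · rw [zero_smul, e.map_eq_zero_iff] at h
    simp [h]
  · rw [e.symm_apply_eq, map_smul, h, smul_smul, inv_mul_cancel₀ hk, one_smul]

variable {E : Type*} [NormedAddCommGroup E] [InnerProductSpace ℝ E]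

theorem LinearMap.IsSymmetric.isPositive_of_hasEigenvalue_nonneg [FiniteDimensional ℝ E]
    {T : E →ₗ[ℝ] E} (hT : T.IsSymmetric) (h : ∀ μ, HasEigenvalue T μ → 0 ≤ μ) :
    T.IsPositive := by
  refine (T.isPositive_iff).mpr ⟨hT, fun x => ?_⟩
  set b := hT.eigenvectorBasis rfl
  rw [← b.repr.inner_map_map, EuclideanSpace.inner_eq_star_dotProduct]
  refine Finset.sum_nonneg fun i _ => ?_
  simp only [b, hT.eigenvectorBasis_apply_self_apply, star_trivial]
  rw [mul_left_comm]
  exact mul_nonneg (h _ (hT.hasEigenvalue_eigenvalues rfl i)) (mul_self_nonneg _)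

theorem LinearMap.IsPositive.injective_add_id {S : E →ₗ[ℝ] E} (hS : S.IsPositive) :
    Function.Injective (S + LinearMap.id : E →ₗ[ℝ] E) := by
  refine (injective_iff_map_eq_zero (S + LinearMap.id)).mpr fun x hx => ?_
  have hx' : ⟪x, S x⟫ + ‖x‖ ^ 2 = 0 := by
    simpa [inner_add_right, real_inner_self_eq_norm_sq] using congrArg (fun v => ⟪x, v⟫) hx
  have hx0 : ‖x‖ ^ 2 = 0 := by linarith [hS.inner_nonneg_right x, sq_nonneg ‖x‖]
  simpa using hx0

theorem LinearEquiv.isPositive_symm_sub_id [FiniteDimensional ℝ E] {e : E ≃ₗ[ℝ] E}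
    (he : (e : E →ₗ[ℝ] E).IsSymmetric)
    (h : ∀ μ, HasEigenvalue (e : E →ₗ[ℝ] E) μ → μ ∈ Set.Ioc 0 1) :
    ((e.symm : E →ₗ[ℝ] E) - LinearMap.id).IsPositive := by
  refine (he.toLinearMap_symm.sub LinearMap.IsSymmetric.id).isPositive_of_hasEigenvalue_nonneg
    fun μ hμ => ?_
  obtain ⟨x, hx, hx0⟩ := hμ.exists_hasEigenvector
  have hsymm : e.symm x = (1 + μ) • x := by
    rw [mem_eigenspace_iff] at hx
    simp only [LinearMap.sub_apply, LinearMap.id_apply, LinearEquiv.coe_coe] at hx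
    rw [add_smul, one_smul, ← hx, add_sub_cancel]
  have hx : e x = (1 + μ)⁻¹ • x := by simpa using e.symm.symm_apply_eq_inv_smul hsymm
  obtain ⟨hpos, hle⟩ := h _ (hasEigenvalue_of_hasEigenvector ⟨mem_eigenspace_iff.mpr hx, hx0⟩)
  linarith [(inv_le_one₀ (inv_pos.mp hpos)).mp hle]

noncomputable def proxObjective (T : E →ₗ[ℝ] E) (τ : ℝ) (y u : E) : ℝ :=
  (1 / 2 : ℝ) * ⟪u, T u⟫ + (1 / (2 * τ)) * ‖u - y‖ ^ 2

section proxObjective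

variable {T : E →ₗ[ℝ] E} {τ : ℝ} {p y : E}

theorem proxObjective_eq_add (hT : T.IsSymmetric) (hτ : τ ≠ 0) (hp : τ • T p + p = y) (u : E) :
    proxObjective T τ y u = proxObjective T τ y p + proxObjective T τ 0 (u - p) := by
  obtain ⟨h, rfl⟩ : ∃ h, u = p + h := ⟨u - p, by abel⟩
  have hquad : ⟪p + h, T (p + h)⟫ = ⟪p, T p⟫ + 2 * ⟪T p, h⟫ + ⟪h, T h⟫ := by
    rw [map_add, inner_add_left, inner_add_right, inner_add_right, ← hT p h, real_inner_comm h]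
    ring
  have hnorm : ‖p + h - y‖ ^ 2 = ‖p - y‖ ^ 2 + 2 * ⟪p - y, h⟫ + ‖h‖ ^ 2 := by
    rw [← norm_add_sq_real, sub_add_eq_add_sub]
  -- the optimality condition `p - y = -τ T p` kills the cross terms
  have hcross : ⟪p - y, h⟫ = -τ * ⟪T p, h⟫ := by
    rw [← hp, sub_add_cancel_right, inner_neg_left, real_inner_smul_left, neg_mul]
  simp only [proxObjective, add_sub_cancel_left, sub_zero]
  rw [hquad, hnorm, hcross]
  field_simp
  ring

theorem proxObjective_le (hT : T.IsPositive) (hτ : 0 < τ) (hp : τ • T p + p = y) (u : E) :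
    proxObjective T τ y p ≤ proxObjective T τ y u := by
  rw [proxObjective_eq_add hT.isSymmetric hτ.ne' hp u, le_add_iff_nonneg_right, proxObjective]
  have := hT.inner_nonneg_right (u - p)
  positivity

theorem eq_of_proxObjective_le (hT : T.IsPositive) (hτ : 0 < τ) (hp : τ • T p + p = y) {u : E}
    (hu : proxObjective T τ y u ≤ proxObjective T τ y p) : u = p := by
  rw [proxObjective_eq_add hT.isSymmetric hτ.ne' hp u, add_le_iff_nonpos_right, proxObjective,
    sub_zero] at hu
  have hquad := hT.inner_nonneg_right (u - p)
  have hτ' : 0 < 1 / (2 * τ) := by positivity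
  have hnorm : ‖u - p‖ ^ 2 ≤ 0 := by nlinarith
  simpa [sub_eq_zero] using hnorm

end proxObjective

/-- **Spectral filtering controls the regularization strength of a linear
denoiser.** Let `D` be symmetric with all eigenvalues in `[c, 1]`, `c > 0`, so
`D` has an inverse `D⁻¹`, and let `J(x) = ½⟨x, (D⁻¹ − Id)x⟩`, `τ > 0`. Then
`τD⁻¹ − (τ−1)Id` is invertible, its inverse is the proximal map of `τJ` (the
unique minimizer of `u ↦ J(u) + (1/(2τ))‖u − y‖²`), and on an eigenvector `v`
of `D` with eigenvalue `λ ∈ [c,1]` it acts as `v ↦ (λ/(τ − λ(τ−1))) v`. -/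
theorem stmt9 {n : ℕ}
    (D : EuclideanSpace ℝ (Fin n) →ₗ[ℝ] EuclideanSpace ℝ (Fin n))
    (hsym : ∀ x y : EuclideanSpace ℝ (Fin n), ⟪D x, y⟫ = ⟪x, D y⟫)
    (c : ℝ) (hc : 0 < c)
    (heig : ∀ μ : ℝ, Module.End.HasEigenvalue (D : Module.End ℝ (EuclideanSpace ℝ (Fin n))) μ →
      μ ∈ Set.Icc c 1)
    (τ : ℝ) (hτ : 0 < τ) :
    ∃ Dinv Ginv : EuclideanSpace ℝ (Fin n) →ₗ[ℝ] EuclideanSpace ℝ (Fin n),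
      Dinv.comp D = LinearMap.id ∧ D.comp Dinv = LinearMap.id ∧
      Ginv.comp (τ • Dinv - (τ - 1) • LinearMap.id) = LinearMap.id ∧
      (τ • Dinv - (τ - 1) • LinearMap.id).comp Ginv = LinearMap.id ∧
      (∀ y : EuclideanSpace ℝ (Fin n),
        (∀ u : EuclideanSpace ℝ (Fin n),
          (1 / 2 : ℝ) * ⟪Ginv y, Dinv (Ginv y) - Ginv y⟫ +
              (1 / (2 * τ)) * ‖Ginv y - y‖ ^ 2 ≤
            (1 / 2 : ℝ) * ⟪u, Dinv u - u⟫ + (1 / (2 * τ)) * ‖u - y‖ ^ 2) ∧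
        (∀ u : EuclideanSpace ℝ (Fin n),
          (∀ w : EuclideanSpace ℝ (Fin n),
            (1 / 2 : ℝ) * ⟪u, Dinv u - u⟫ + (1 / (2 * τ)) * ‖u - y‖ ^ 2 ≤
              (1 / 2 : ℝ) * ⟪w, Dinv w - w⟫ + (1 / (2 * τ)) * ‖w - y‖ ^ 2) →
          u = Ginv y)) ∧
      (∀ (v : EuclideanSpace ℝ (Fin n)) (lam : ℝ), lam ∈ Set.Icc c 1 →
        D v = lam • v → Ginv v = (lam / (τ - lam * (τ - 1))) • v) := by
  have hD : Function.Injective D := LinearMap.ker_eq_bot.mp <|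
    ((LinearMap.not_hasEigenvalue_zero_tfae D).out 0 4).mp fun h0 => (heig 0 h0).1.not_gt hc
  set eD := LinearEquiv.ofInjectiveEndo D hD
  set T : EuclideanSpace ℝ (Fin n) →ₗ[ℝ] EuclideanSpace ℝ (Fin n) :=
    eD.symm.toLinearMap - LinearMap.id
  have hT : T.IsPositive := eD.isPositive_symm_sub_id hsym fun μ hμ =>
    ⟨hc.trans_le (heig μ hμ).1, (heig μ hμ).2⟩
  set eG := LinearEquiv.ofInjectiveEndo (τ • T + LinearMap.id)
    (hT.smul_of_nonneg hτ.le).injective_add_id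
  have hG : τ • eD.symm.toLinearMap - (τ - 1) • LinearMap.id = eG.toLinearMap := by
    change _ = τ • T + LinearMap.id
    rw [smul_sub, sub_smul, one_smul]
    abel
  refine ⟨eD.symm.toLinearMap, eG.symm.toLinearMap, eD.symm_comp, eD.comp_symm,
    hG ▸ eG.symm_comp, hG ▸ eG.comp_symm,
    fun y => ⟨fun u => proxObjective_le hT hτ (eG.apply_symm_apply y) u,
      fun u hu => eq_of_proxObjective_le hT hτ (eG.apply_symm_apply y) (hu _)⟩,
    fun v lam hlam hv => ?_⟩
  have hDv : eD.symm v = lam⁻¹ • v := eD.symm_apply_eq_inv_smul hv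
  have hGv : eG v = (τ * lam⁻¹ - (τ - 1)) • v := by
    rw [← LinearEquiv.coe_coe, ← hG]
    simp [hDv, smul_smul, sub_smul]
  rw [LinearEquiv.coe_coe, eG.symm_apply_eq_inv_smul hGv]
  have hlam0 : lam ≠ 0 := (hc.trans_le hlam.1).ne'
  field_simp
end

section
/- Let K : ℝⁿ → ℝᵐ be a linear map, let N be a norm on ℝᵐ with dual norm N*(p) = sup{⟨p, z⟩ : N(z) ≤ 1}, let α > 0 and y ∈ ℝⁿ. Then strong duality holds between the primal generalized ROF problem and its dual: min_{u ∈ ℝⁿ} ( α·N(Ku) + (1/2)‖u − y‖² ) = (1/2)‖y‖² − min_{p ∈ ℝᵐ, N*(p) ≤ α} (1/2)‖Kᵀp − y‖². Moreover, if p* is a minimizer of the dual problem, then u* = y − Kᵀp* is the (unique) minimizer of the primal problem. -/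
open scoped RealInnerProductSpace

/-!
Write `P(u) = α N(Ku) + ½‖u - y‖²`. For every `q` and `u` there is the exact identity
`P(u) = ½‖y‖² - ½‖Kᵀq - y‖² + ½‖u - (y - Kᵀq)‖² + (α N(Ku) - ⟪q, Ku⟫)`,
and the last term is nonnegative when `N*(q) ≤ α` (weak duality). The dual feasible set is
convex and compact, so the dual problem has a minimizer `q₀`. Its first-order condition
`⟪Kᵀq₀ - y, Kᵀ(q - q₀)⟫ ≥ 0`, tested against a Hahn–Banach functional `q` with
`⟪q, Ku*⟫ = α N(Ku*)` for `u* = y - Kᵀq₀`, makes the last term vanish at `u = u*`. Hence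
`P(u) ≥ P(u*) + ½‖u - u*‖²` for all `u`, which gives strong duality, optimality of `u*` and its
uniqueness.
-/

namespace Seminorm

section FiniteDimensional

variable {F : Type*} [NormedAddCommGroup F] [NormedSpace ℝ F] [FiniteDimensional ℝ F]

theorem continuous_of_finiteDimensional (p : Seminorm ℝ F) : Continuous p :=
  continuousOn_univ.mp (p.convexOn.continuousOn isOpen_univ)

theorem exists_pos_mul_norm_le (p : Seminorm ℝ F) (hp : ∀ z, p z = 0 → z = 0) :
    ∃ c, 0 < c ∧ ∀ z, c * ‖z‖ ≤ p z := by
  rcases subsingleton_or_nontrivial F with _ | _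
  · exact ⟨1, one_pos, fun z => by simp [Subsingleton.elim z 0]⟩
  obtain ⟨w, hw, hmin⟩ := (isCompact_sphere (0 : F) 1).exists_isMinOn
    (NormedSpace.sphere_nonempty.2 zero_le_one) p.continuous_of_finiteDimensional.continuousOn
  have hw0 : w ≠ 0 := ne_zero_of_mem_unit_sphere ⟨w, hw⟩
  refine ⟨p w, (apply_nonneg p w).lt_of_ne (fun h => hw0 (hp w h.symm)), fun z => ?_⟩
  rcases eq_or_ne z 0 with rfl | hz
  · simp
  have hz' : 0 < ‖z‖ := norm_pos_iff.2 hz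
  have hmem : ‖z‖⁻¹ • z ∈ Metric.sphere (0 : F) 1 := by
    simp [norm_smul, hz'.ne']
  have h := isMinOn_iff.1 hmin _ hmem
  rw [map_smul_eq_mul, norm_inv, norm_norm] at h
  calc p w * ‖z‖ ≤ ‖z‖⁻¹ * p z * ‖z‖ := by gcongr
    _ = p z := by field_simp

end FiniteDimensional

variable {F : Type*} [NormedAddCommGroup F] [InnerProductSpace ℝ F]

/-- The ball `{q | p*(q) ≤ α}` of the dual seminorm, described by its defining inequalities
(see `sSup_inner_le_iff`). -/
def dualClosedBall (p : Seminorm ℝ F) (α : ℝ) : Set F := {q | ∀ z, ⟪q, z⟫ ≤ α * p z}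

variable (p : Seminorm ℝ F) {α : ℝ}

theorem zero_mem_dualClosedBall (hα : 0 ≤ α) : (0 : F) ∈ p.dualClosedBall α :=
  fun z => by simpa using mul_nonneg hα (apply_nonneg p z)

theorem convex_dualClosedBall (α : ℝ) : Convex ℝ (p.dualClosedBall α) := by
  intro q₁ hq₁ q₂ hq₂ a b ha hb hab z
  calc ⟪a • q₁ + b • q₂, z⟫ = a * ⟪q₁, z⟫ + b * ⟪q₂, z⟫ := by
        rw [inner_add_left, real_inner_smul_left, real_inner_smul_left]
    _ ≤ a * (α * p z) + b * (α * p z) := by gcongr <;> [exact hq₁ z; exact hq₂ z]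
    _ = α * p z := by rw [← add_mul, hab, one_mul]

theorem isClosed_dualClosedBall (α : ℝ) : IsClosed (p.dualClosedBall α) := by
  simp only [dualClosedBall, Set.ofPred_forall]
  exact isClosed_iInter fun z => isClosed_le (by fun_prop) continuous_const

variable [FiniteDimensional ℝ F]

theorem isCompact_dualClosedBall (hα : 0 ≤ α) : IsCompact (p.dualClosedBall α) := by
  obtain ⟨C, hC, hpC⟩ := p.bound_of_continuous_normedSpace p.continuous_of_finiteDimensional
  refine Metric.isCompact_of_isClosed_isBounded (p.isClosed_dualClosedBall α)
    (isBounded_iff_forall_norm_le.2 ⟨α * C, fun q hq => ?_⟩)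
  have h : ‖q‖ ^ 2 ≤ α * C * ‖q‖ := by
    calc ‖q‖ ^ 2 = ⟪q, q⟫ := (real_inner_self_eq_norm_sq q).symm
      _ ≤ α * p q := hq q
      _ ≤ α * (C * ‖q‖) := by gcongr; exact hpC q
      _ = α * C * ‖q‖ := by ring
  nlinarith [norm_nonneg q, mul_nonneg hα hC.le]

theorem sSup_inner_le_iff (hp : ∀ z, p z = 0 → z = 0) (hα : 0 ≤ α) (q : F) :
    sSup {r | ∃ z, p z ≤ 1 ∧ r = ⟪q, z⟫} ≤ α ↔ q ∈ p.dualClosedBall α := by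
  obtain ⟨c, hc, hcp⟩ := p.exists_pos_mul_norm_le hp
  have hbdd : BddAbove {r | ∃ z, p z ≤ 1 ∧ r = ⟪q, z⟫} := by
    refine ⟨‖q‖ / c, ?_⟩
    rintro _ ⟨z, hz, rfl⟩
    have hzc : ‖z‖ ≤ 1 / c := by rw [le_div_iff₀ hc, mul_comm]; exact (hcp z).trans hz
    calc ⟪q, z⟫ ≤ ‖q‖ * ‖z‖ := real_inner_le_norm q z
      _ ≤ ‖q‖ * (1 / c) := by gcongr
      _ = ‖q‖ / c := by ring
  constructor
  · intro h z
    rcases (apply_nonneg p z).eq_or_lt with hz | hz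
    · simp [hp z hz.symm]
    have hmem : p ((p z)⁻¹ • z) ≤ 1 := by
      rw [map_smul_eq_mul, norm_inv, Real.norm_of_nonneg hz.le, inv_mul_cancel₀ hz.ne']
    have := (le_csSup hbdd ⟨_, hmem, rfl⟩).trans h
    rw [real_inner_smul_right, inv_mul_le_iff₀ hz, mul_comm] at this
    exact this
  · intro hq
    refine csSup_le ⟨0, 0, by simp, by simp⟩ ?_
    rintro _ ⟨z, hz, rfl⟩
    calc ⟪q, z⟫ ≤ α * p z := hq z
      _ ≤ α * 1 := by gcongr
      _ = α := mul_one α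

theorem exists_mem_dualClosedBall_inner_eq (hα : 0 ≤ α) (z : F) :
    ∃ q ∈ p.dualClosedBall α, ⟪q, z⟫ = α * p z := by
  have hf : ∀ c : ℝ, c • z = 0 → c • p z = 0 := by
    intro c hc
    rcases smul_eq_zero.1 hc with rfl | rfl <;> simp
  let f : F →ₗ.[ℝ] ℝ := LinearPMap.mkSpanSingleton' (σ := RingHom.id ℝ) z (p z) hf
  obtain ⟨g, hgf, hgp⟩ := exists_extension_of_le_sublinear f p
    (fun c hc x => by rw [map_smul_eq_mul, Real.norm_of_nonneg hc.le])
    (map_add_le_add p) (by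
      rintro ⟨_, hx⟩
      obtain ⟨c, rfl⟩ := Submodule.mem_span_singleton.1 hx
      rw [LinearPMap.mkSpanSingleton'_apply, map_smul_eq_mul, smul_eq_mul, Real.norm_eq_abs]
      exact mul_le_mul_of_nonneg_right (le_abs_self c) (apply_nonneg p z))
  let q := (InnerProductSpace.toDual ℝ F).symm (LinearMap.toContinuousLinearMap g)
  have hq : ∀ w, ⟪q, w⟫ = g w := fun w => by simp [q]
  refine ⟨α • q, fun w => ?_, ?_⟩
  · rw [real_inner_smul_left, hq]
    exact mul_le_mul_of_nonneg_left (hgp w) hα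
  · have hgz : g z = p z := (hgf ⟨z, Submodule.mem_span_singleton_self z⟩).trans
      (LinearPMap.mkSpanSingleton'_apply_self _ _ _ _)
    rw [real_inner_smul_left, hq, hgz]

end Seminorm

theorem inner_nonneg_of_isMinOn_norm_sub_sq {E F : Type*} [NormedAddCommGroup E]
    [InnerProductSpace ℝ E] [NormedAddCommGroup F] [NormedSpace ℝ F]
    (L : F →L[ℝ] E) (b : E) {s : Set F} (hs : Convex ℝ s) {x₀ x : F}
    (hmin : IsMinOn (fun x => ‖L x - b‖ ^ 2) s x₀) (hx₀ : x₀ ∈ s) (hx : x ∈ s) :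
    0 ≤ ⟪L x₀ - b, L (x - x₀)⟫ := by
  have hderiv : HasFDerivAt (fun x => ‖L x - b‖ ^ 2)
      (2 • (innerSL ℝ (L x₀ - b)).comp L) x₀ :=
    (L.hasFDerivAt.sub_const b).norm_sq
  have htangent : x - x₀ ∈ posTangentConeAt s x₀ :=
    mem_posTangentConeAt_of_segment_subset (by simpa using hs.segment_subset hx₀ hx)
  have := hmin.localize.hasFDerivWithinAt_nonneg hderiv.hasFDerivWithinAt htangent
  rw [smul_apply, ContinuousLinearMap.comp_apply, innerSL_apply_apply,
    two_smul] at this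
  linarith

namespace Rof

noncomputable def primal {E F : Type*} [NormedAddCommGroup E] [NormedSpace ℝ E]
    [NormedAddCommGroup F] [NormedSpace ℝ F] (K : E →L[ℝ] F) (p : Seminorm ℝ F) (α : ℝ) (y u : E) :
    ℝ :=
  α * p (K u) + 1 / 2 * ‖u - y‖ ^ 2

section

variable {E F : Type*} [NormedAddCommGroup E] [InnerProductSpace ℝ E] [CompleteSpace E]
  [NormedAddCommGroup F] [InnerProductSpace ℝ F] [CompleteSpace F]
  (K : E →L[ℝ] F) (p : Seminorm ℝ F) (α : ℝ) (y : E)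

local notation "Kᵀ" => ContinuousLinearMap.adjoint K

theorem primal_eq_add (q : F) (u : E) :
    primal K p α y u = 1 / 2 * ‖y‖ ^ 2 - 1 / 2 * ‖Kᵀ q - y‖ ^ 2 +
      1 / 2 * ‖u - (y - Kᵀ q)‖ ^ 2 + (α * p (K u) - ⟪q, K u⟫) := by
  have h : u - (y - Kᵀ q) = (u - y) + Kᵀ q := by abel
  rw [primal, ← ContinuousLinearMap.adjoint_inner_left, h, norm_add_sq_real,
    norm_sub_sq_real (Kᵀ q) y, inner_sub_left, real_inner_comm (Kᵀ q) y,
    real_inner_comm (Kᵀ q) u]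
  ring

theorem dual_add_le_primal {q : F} (hq : q ∈ p.dualClosedBall α) (u : E) :
    1 / 2 * ‖y‖ ^ 2 - 1 / 2 * ‖Kᵀ q - y‖ ^ 2 + 1 / 2 * ‖u - (y - Kᵀ q)‖ ^ 2 ≤
      primal K p α y u := by
  rw [primal_eq_add K p α y q u]
  linarith [hq (K u)]

end

section

variable {E F : Type*} [NormedAddCommGroup E] [InnerProductSpace ℝ E] [CompleteSpace E]
  [NormedAddCommGroup F] [InnerProductSpace ℝ F] [FiniteDimensional ℝ F]
  (K : E →L[ℝ] F) (p : Seminorm ℝ F) {α : ℝ} (y : E)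

local notation "Kᵀ" => ContinuousLinearMap.adjoint K

theorem inner_eq_of_isMinOn_dual (hα : 0 ≤ α) {q₀ : F} (hq₀ : q₀ ∈ p.dualClosedBall α)
    (hmin : IsMinOn (fun q => ‖Kᵀ q - y‖ ^ 2) (p.dualClosedBall α) q₀) :
    ⟪q₀, K (y - Kᵀ q₀)⟫ = α * p (K (y - Kᵀ q₀)) := by
  obtain ⟨q, hq, hqz⟩ := p.exists_mem_dualClosedBall_inner_eq hα (K (y - Kᵀ q₀))
  have hvar := inner_nonneg_of_isMinOn_norm_sub_sq Kᵀ y (p.convex_dualClosedBall α) hmin hq₀ hq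
  rw [← neg_sub y, inner_neg_left, ContinuousLinearMap.adjoint_inner_right, inner_sub_right,
    real_inner_comm q, real_inner_comm q₀] at hvar
  linarith [hq₀ (K (y - Kᵀ q₀))]

theorem primal_eq_of_isMinOn_dual (hα : 0 ≤ α) {q₀ : F} (hq₀ : q₀ ∈ p.dualClosedBall α)
    (hmin : IsMinOn (fun q => ‖Kᵀ q - y‖ ^ 2) (p.dualClosedBall α) q₀) :
    primal K p α y (y - Kᵀ q₀) = 1 / 2 * ‖y‖ ^ 2 - 1 / 2 * ‖Kᵀ q₀ - y‖ ^ 2 := by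
  rw [primal_eq_add K p α y q₀, inner_eq_of_isMinOn_dual K p y hα hq₀ hmin]
  simp

theorem primal_add_le_of_isMinOn_dual (hα : 0 ≤ α) {q₀ : F} (hq₀ : q₀ ∈ p.dualClosedBall α)
    (hmin : IsMinOn (fun q => ‖Kᵀ q - y‖ ^ 2) (p.dualClosedBall α) q₀) (u : E) :
    primal K p α y (y - Kᵀ q₀) + 1 / 2 * ‖u - (y - Kᵀ q₀)‖ ^ 2 ≤ primal K p α y u := by
  rw [primal_eq_of_isMinOn_dual K p y hα hq₀ hmin]
  exact dual_add_le_primal K p α y hq₀ u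

end

end Rof

/-- **Strong duality for the generalized ROF problem.** With `K` linear, `N` a
norm on `ℝᵐ` with dual norm `N*(p) = sup{⟨p,z⟩ : N(z) ≤ 1}`, `α > 0`, `y ∈ ℝⁿ`:
`min_u (α N(Ku) + ½‖u − y‖²) = ½‖y‖² − min_{N*(p) ≤ α} ½‖Kᵀp − y‖²` (both minima
are attained), and if `p*` minimizes the dual problem then `u* = y − Kᵀp*` is
the unique minimizer of the primal problem. -/
theorem stmt14 {n m' : ℕ}
    (K : EuclideanSpace ℝ (Fin n) →L[ℝ] EuclideanSpace ℝ (Fin m'))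
    (N : EuclideanSpace ℝ (Fin m') → ℝ)
    (hN0 : ∀ z, N z = 0 ↔ z = 0)
    (hNhom : ∀ (a : ℝ) (z : EuclideanSpace ℝ (Fin m')), N (a • z) = |a| * N z)
    (hNtri : ∀ z w : EuclideanSpace ℝ (Fin m'), N (z + w) ≤ N z + N w)
    (Nstar : EuclideanSpace ℝ (Fin m') → ℝ)
    (hNstar : ∀ p, Nstar p =
      sSup {r : ℝ | ∃ z : EuclideanSpace ℝ (Fin m'), N z ≤ 1 ∧ r = ⟪p, z⟫})
    (α : ℝ) (hα : 0 < α) (y : EuclideanSpace ℝ (Fin n)) :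
    (∃ u0 : EuclideanSpace ℝ (Fin n), ∀ u,
      α * N (K u0) + (1 / 2) * ‖u0 - y‖ ^ 2 ≤ α * N (K u) + (1 / 2) * ‖u - y‖ ^ 2) ∧
    (∃ p0 : EuclideanSpace ℝ (Fin m'), Nstar p0 ≤ α ∧ ∀ p, Nstar p ≤ α →
      (1 / 2) * ‖(ContinuousLinearMap.adjoint K) p0 - y‖ ^ 2 ≤
        (1 / 2) * ‖(ContinuousLinearMap.adjoint K) p - y‖ ^ 2) ∧
    (∀ (u0 : EuclideanSpace ℝ (Fin n)) (p0 : EuclideanSpace ℝ (Fin m')),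
      (∀ u, α * N (K u0) + (1 / 2) * ‖u0 - y‖ ^ 2 ≤
        α * N (K u) + (1 / 2) * ‖u - y‖ ^ 2) →
      Nstar p0 ≤ α →
      (∀ p, Nstar p ≤ α →
        (1 / 2) * ‖(ContinuousLinearMap.adjoint K) p0 - y‖ ^ 2 ≤
          (1 / 2) * ‖(ContinuousLinearMap.adjoint K) p - y‖ ^ 2) →
      α * N (K u0) + (1 / 2) * ‖u0 - y‖ ^ 2 =
        (1 / 2) * ‖y‖ ^ 2 - (1 / 2) * ‖(ContinuousLinearMap.adjoint K) p0 - y‖ ^ 2) ∧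
    (∀ p0 : EuclideanSpace ℝ (Fin m'), Nstar p0 ≤ α →
      (∀ p, Nstar p ≤ α →
        (1 / 2) * ‖(ContinuousLinearMap.adjoint K) p0 - y‖ ^ 2 ≤
          (1 / 2) * ‖(ContinuousLinearMap.adjoint K) p - y‖ ^ 2) →
      (∀ u, α * N (K (y - (ContinuousLinearMap.adjoint K) p0)) +
          (1 / 2) * ‖(y - (ContinuousLinearMap.adjoint K) p0) - y‖ ^ 2 ≤
        α * N (K u) + (1 / 2) * ‖u - y‖ ^ 2) ∧
      (∀ u : EuclideanSpace ℝ (Fin n),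
        (∀ w, α * N (K u) + (1 / 2) * ‖u - y‖ ^ 2 ≤
          α * N (K w) + (1 / 2) * ‖w - y‖ ^ 2) →
        u = y - (ContinuousLinearMap.adjoint K) p0)) := by
  let p : Seminorm ℝ (EuclideanSpace ℝ (Fin m')) :=
    Seminorm.of N hNtri fun a z => by rw [hNhom, Real.norm_eq_abs]
  have hP : ∀ u, Rof.primal K p α y u = α * N (K u) + 1 / 2 * ‖u - y‖ ^ 2 := fun u => rfl
  have hD : ∀ q, Nstar q ≤ α ↔ q ∈ p.dualClosedBall α := fun q => by
    rw [hNstar]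
    exact p.sSup_inner_le_iff (fun z => (hN0 z).1) hα.le q
  have hmin : ∀ q₀, (∀ q, Nstar q ≤ α → 1 / 2 * ‖ContinuousLinearMap.adjoint K q₀ - y‖ ^ 2 ≤
      1 / 2 * ‖ContinuousLinearMap.adjoint K q - y‖ ^ 2) ↔
      IsMinOn (fun q => ‖ContinuousLinearMap.adjoint K q - y‖ ^ 2) (p.dualClosedBall α) q₀ :=
    fun q₀ => by simp only [isMinOn_iff, hD, mul_le_mul_iff_right₀ one_half_pos]
  obtain ⟨q₀, hq₀, hq₀min⟩ := (p.isCompact_dualClosedBall hα.le).exists_isMinOn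
    ⟨0, p.zero_mem_dualClosedBall hα.le⟩
    (by fun_prop : Continuous fun q => ‖ContinuousLinearMap.adjoint K q - y‖ ^ 2).continuousOn
  refine ⟨⟨y - ContinuousLinearMap.adjoint K q₀, fun u => ?_⟩,
    ⟨q₀, (hD q₀).2 hq₀, (hmin q₀).2 hq₀min⟩, ?_, ?_⟩
  · simpa only [hP] using
      le_of_add_le_of_nonneg_left (Rof.primal_add_le_of_isMinOn_dual K p y hα.le hq₀ hq₀min u)
        (by positivity)
  · intro u₀ p₀ hu₀ hp₀ hp₀min
    have hval := Rof.primal_eq_of_isMinOn_dual K p y hα.le ((hD p₀).1 hp₀) ((hmin p₀).1 hp₀min)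
    have hweak := Rof.dual_add_le_primal K p α y ((hD p₀).1 hp₀) u₀
    rw [hP] at hval hweak
    linarith [hu₀ (y - ContinuousLinearMap.adjoint K p₀),
      sq_nonneg ‖u₀ - (y - ContinuousLinearMap.adjoint K p₀)‖]
  · intro p₀ hp₀ hp₀min
    have hopt := Rof.primal_add_le_of_isMinOn_dual K p y hα.le ((hD p₀).1 hp₀) ((hmin p₀).1 hp₀min)
    simp only [hP] at hopt
    refine ⟨fun u => le_of_add_le_of_nonneg_left (hopt u) (by positivity), fun u hu => ?_⟩
    have h := (hopt u).trans (hu (y - ContinuousLinearMap.adjoint K p₀))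
    rw [← sub_eq_zero, ← norm_eq_zero]
    nlinarith [norm_nonneg (u - (y - ContinuousLinearMap.adjoint K p₀))]
end
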